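/- arXiv:1905.07301 — 5 statements merged into one kernel-verified Lean document; each statement's English description precedes it below -/
import Mathlib

section
/- If {e1, e2} is a removable doubleton of a brick G, then e1 and e2 are mutually dependent, i.e., every perfect matching of G contains both e1 and e2 or neither of them. -/
/-! A perfect matching `M` of `G` that contains `e₂` but not `e₁` is a perfect matching of
`G - e₁` through `e₂`, and `e₂` is the only edge of `G - e₁` not in `G - {e₁, e₂}`, whose edges
are covered by perfect matchings already. So `G - e₁` would be matching covered, i.e. `e₁`
removable. -/


namespace Paper

open SimpleGraph

variable {V : Type*}

/-- `∂(X)`: the set of edges of `G` with exactly one end in `X`. -/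
def cutEdges (G : SimpleGraph V) (X : Set V) : Set (Sym2 V) :=
  {e | e ∈ G.edgeSet ∧ ∃ x y, e = s(x, y) ∧ x ∈ X ∧ y ∉ X}

/-- An edge cut `∂(X)` is trivial if `X` or its complement is a singleton. -/
def IsTrivialShore (X : Set V) : Prop :=
  (∃ v, X = {v}) ∨ (∃ v, Xᶜ = {v})

/-- The edge cut `∂(X)` is tight: every perfect matching contains exactly one of its edges. -/
def IsTightCut (G : SimpleGraph V) (X : Set V) : Prop :=
  ∀ M : G.Subgraph, M.IsPerfectMatching → (M.edgeSet ∩ cutEdges G X).ncard = 1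

/-- A connected graph with at least one edge in which every edge lies in a perfect matching. -/
def MatchingCovered (G : SimpleGraph V) : Prop :=
  G.Connected ∧ G.edgeSet.Nonempty ∧
    ∀ e ∈ G.edgeSet, ∃ M : G.Subgraph, M.IsPerfectMatching ∧ e ∈ M.edgeSet

/-- A brick: a non-bipartite matching covered graph with no nontrivial tight cut. -/
def IsBrick (G : SimpleGraph V) : Prop :=
  MatchingCovered G ∧ ¬ G.Colorable 2 ∧
    ∀ X : Set V, IsTightCut G X → IsTrivialShore X

/-- Two edges are mutually dependent if every perfect matching contains both or neither. -/
def MutuallyDependent (G : SimpleGraph V) (e f : Sym2 V) : Prop :=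
  e ∈ G.edgeSet ∧ f ∈ G.edgeSet ∧
    ∀ M : G.Subgraph, M.IsPerfectMatching → (e ∈ M.edgeSet ↔ f ∈ M.edgeSet)

/-- An edge `e` of `G` is removable if `G − e` is matching covered. -/
def Removable (G : SimpleGraph V) (e : Sym2 V) : Prop :=
  e ∈ G.edgeSet ∧ MatchingCovered (G.deleteEdges {e})

/-- `{e, f}` is a removable doubleton of `G`. -/
def RemovableDoubleton (G : SimpleGraph V) (e f : Sym2 V) : Prop :=
  e ∈ G.edgeSet ∧ f ∈ G.edgeSet ∧ e ≠ f ∧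
    ¬ Removable G e ∧ ¬ Removable G f ∧ MatchingCovered (G.deleteEdges {e, f})

/-- A cubic graph: every vertex has degree 3. -/
def Cubic (G : SimpleGraph V) : Prop := ∀ v : V, (G.neighborSet v).ncard = 3

/-- A cubic graph is essentially 4-edge-connected if it is 2-edge-connected and
every 3-cut is trivial. -/
def EssFourEdgeConnected (G : SimpleGraph V) : Prop :=
  (∀ X : Set V, X.Nonempty → Xᶜ.Nonempty → 2 ≤ (cutEdges G X).ncard) ∧
    ∀ X : Set V, (cutEdges G X).ncard = 3 → IsTrivialShore X

/-- A non-bipartite matching covered graph is near-bipartite if removing some pair of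
edges yields a bipartite matching covered graph. -/
def NearBipartite (G : SimpleGraph V) : Prop :=
  MatchingCovered G ∧ ¬ G.Colorable 2 ∧
    ∃ e f : Sym2 V, e ∈ G.edgeSet ∧ f ∈ G.edgeSet ∧ e ≠ f ∧
      (G.deleteEdges {e, f}).Colorable 2 ∧ MatchingCovered (G.deleteEdges {e, f})

/-- The set of edges of `G` joining a vertex of `X` to a vertex of `Y`. -/
def betweenEdges (G : SimpleGraph V) (X Y : Set V) : Set (Sym2 V) :=
  {e | e ∈ G.edgeSet ∧ ∃ x ∈ X, ∃ y ∈ Y, e = s(x, y)}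

def _root_.SimpleGraph.Subgraph.transfer {G G' : SimpleGraph V} (M : G.Subgraph)
    (h : M.spanningCoe ≤ G') : G'.Subgraph where
  verts := M.verts
  Adj := M.Adj
  adj_sub hvw := h hvw
  edge_vert := M.edge_vert
  symm := M.symm

lemma _root_.SimpleGraph.Subgraph.spanningCoe_le_deleteEdges {G : SimpleGraph V}
    (M : G.Subgraph) {s : Set (Sym2 V)} (hs : Disjoint M.edgeSet s) :
    M.spanningCoe ≤ G.deleteEdges s := fun _ _ hvw =>
  (deleteEdges_adj ..).mpr ⟨M.adj_sub hvw, hs.notMem_of_mem_left (M.mem_edgeSet.mpr hvw)⟩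

lemma MatchingCovered.of_le {G G' : SimpleGraph V} (hGG' : G ≤ G') (hG' : G'.Connected)
    (hG : MatchingCovered G)
    (hcov : ∀ e ∈ G'.edgeSet \ G.edgeSet,
      ∃ M : G'.Subgraph, M.IsPerfectMatching ∧ e ∈ M.edgeSet) :
    MatchingCovered G' := by
  refine ⟨hG', hG.2.1.mono (edgeSet_mono hGG'), fun e he => ?_⟩
  by_cases heG : e ∈ G.edgeSet
  · obtain ⟨M, hM, heM⟩ := hG.2.2 e heG
    exact ⟨M.transfer (M.spanningCoe_le.trans hGG'), hM, heM⟩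
  · exact hcov e ⟨he, heG⟩

lemma matchingCovered_deleteEdges_of_isPerfectMatching {G : SimpleGraph V} {e f : Sym2 V}
    (hH : MatchingCovered (G.deleteEdges {e, f}))
    (M : G.Subgraph) (hM : M.IsPerfectMatching) (heM : e ∉ M.edgeSet) (hfM : f ∈ M.edgeSet) :
    MatchingCovered (G.deleteEdges {e}) := by
  have hle : G.deleteEdges {e, f} ≤ G.deleteEdges {e} :=
    deleteEdges_anti (Set.singleton_subset_iff.mpr (Set.mem_insert e {f}))
  refine hH.of_le hle (hH.1.mono hle) fun g hg => ?_
  have hgf : g = f := by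
    simp only [edgeSet_deleteEdges, Set.mem_sdiff, Set.mem_insert_iff,
      Set.mem_singleton_iff] at hg
    tauto
  refine ⟨M.transfer (M.spanningCoe_le_deleteEdges ?_), hM, hgf ▸ hfM⟩
  exact Set.disjoint_singleton_right.mpr heM

lemma RemovableDoubleton.symm {G : SimpleGraph V} {e f : Sym2 V}
    (hd : RemovableDoubleton G e f) : RemovableDoubleton G f e := by
  obtain ⟨he, hf, hef, hre, hrf, hH⟩ := hd
  exact ⟨hf, he, hef.symm, hrf, hre, Set.pair_comm e f ▸ hH⟩

lemma RemovableDoubleton.mem_of_mem {G : SimpleGraph V} {e f : Sym2 V}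
    (hd : RemovableDoubleton G e f) {M : G.Subgraph} (hM : M.IsPerfectMatching)
    (hfM : f ∈ M.edgeSet) : e ∈ M.edgeSet := by
  obtain ⟨he, -, -, hre, -, hH⟩ := hd
  by_contra heM
  exact hre ⟨he, matchingCovered_deleteEdges_of_isPerfectMatching hH M hM heM hfM⟩

lemma RemovableDoubleton.mutuallyDependent {G : SimpleGraph V} {e f : Sym2 V}
    (hd : RemovableDoubleton G e f) : MutuallyDependent G e f :=
  ⟨hd.1, hd.2.1, fun _ hM => ⟨hd.symm.mem_of_mem hM, hd.mem_of_mem hM⟩⟩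

theorem stmt2_general {V : Type*} (G : SimpleGraph V)
    (e1 e2 : Sym2 V) (hd : RemovableDoubleton G e1 e2) :
    ∀ M : G.Subgraph, M.IsPerfectMatching →
      ((e1 ∈ M.edgeSet ∧ e2 ∈ M.edgeSet) ∨ (e1 ∉ M.edgeSet ∧ e2 ∉ M.edgeSet)) := by
  intro M hM
  have := hd.mutuallyDependent.2.2 M hM
  tauto

/-- If `{e1, e2}` is a removable doubleton of a brick `G`, then every
perfect matching of `G` contains both `e1` and `e2` or neither of them. -/
theorem stmt2 {V : Type*} [Fintype V] (G : SimpleGraph V) (hG : IsBrick G)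
    (e1 e2 : Sym2 V) (hd : RemovableDoubleton G e1 e2) :
    ∀ M : G.Subgraph, M.IsPerfectMatching →
      ((e1 ∈ M.edgeSet ∧ e2 ∈ M.edgeSet) ∨ (e1 ∉ M.edgeSet ∧ e2 ∉ M.edgeSet)) :=
  stmt2_general G e1 e2 hd

end Paper
end

section
/- Let G be a bipartite matching covered graph with bipartition (A, B), and suppose e1 and e2 are two distinct mutually dependent edges of G. Then {e1, e2} is a 2-edge-cut of G separating G into two balanced parts; that is, there exists a set X of vertices with ∅ ≠ X ≠ V(G) such that the set of edges with exactly one end in X is precisely {e1, e2}, and |X ∩ A| = |X ∩ B| (and consequently the complement of X also meets A and B in sets of equal size). -/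
namespace Paper

open SimpleGraph

variable {V : Type*}

/-! Write `e1 = a1b1` and `e2 = a2b2` with `a1, a2 ∈ A`, and fix a perfect matching `M0` containing
both. Orient the edges of `M0` from `A` to `B` and all other edges from `B` to `A`, delete `e2`, and
let `X` be the set of vertices reachable from `b1`. A directed path from `b1` back to `a1` would
close an `M0`-alternating cycle through `e1` avoiding `e2`, and switching `M0` along it would give a
perfect matching containing `e2` but not `e1`; hence `a1 ∉ X`. By construction no edge leaves `X`
from `B` except `e1`, and no edge of `M0` leaves `X` except `e1` and possibly `e2`. For a perfect
matching `M`, the vertices of `X ∩ A` and of `X ∩ B` matched outside `X` differ in number by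
`|X ∩ A| - |X ∩ B|`; comparing `M0` with a perfect matching avoiding `e1` gives `a2 ∈ X` and
`|X ∩ A| = |X ∩ B|`, and then, as every edge lies in a perfect matching, `∂(X) = {e1, e2}`. -/

variable {G : SimpleGraph V}

theorem _root_.SimpleGraph.Subgraph.IsPerfectMatching.ncard_eq_of_adj_mem [Finite V]
    {M : G.Subgraph} (hM : M.IsPerfectMatching) {S T : Set V}
    (hST : ∀ v ∈ S, ∀ w, M.Adj v w → w ∈ T)
    (hTS : ∀ w ∈ T, ∀ v, M.Adj w v → v ∈ S) :
    S.ncard = T.ncard := by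
  choose p hp using fun v ↦ Subgraph.isPerfectMatching_iff.mp hM v
  refine Set.ncard_congr (fun v _ ↦ p v) (fun v hv ↦ hST v hv _ (hp v).1)
    (fun v w _ _ h ↦ hM.1.eq_of_adj_right (hp v).1 (h ▸ (hp w).1)) fun w hw ↦ ?_
  exact ⟨p w, hTS w hw _ (hp w).1, ((hp (p w)).2 w (hp w).1.symm).symm⟩

def exits (M : G.Subgraph) (X : Set V) : Set V := {v | v ∈ X ∧ ∃ w ∉ X, M.Adj v w}

lemma exits_subset (M : G.Subgraph) (X : Set V) : exits M X ⊆ X := fun _ hv ↦ hv.1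

section Bipartite

variable {A B : Set V} {M : G.Subgraph}

lemma mem_diff_exits_inter_of_adj (hG : G.IsBipartiteWith A B) (hM : M.IsMatching)
    {X : Set V} {v w : V} (hv : v ∈ (X \ exits M X) ∩ A) (hvw : M.Adj v w) :
    w ∈ (X \ exits M X) ∩ B := by
  obtain ⟨⟨hvX, hvE⟩, hvA⟩ := hv
  have hwX : w ∈ X := by_contra fun hwX ↦ hvE ⟨hvX, w, hwX, hvw⟩
  refine ⟨⟨hwX, fun ⟨_, u, huX, hwu⟩ ↦ huX ?_⟩, hG.mem_of_mem_adj hvA (M.adj_sub hvw)⟩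
  rwa [hM.eq_of_adj_left hwu hvw.symm]

theorem ncard_inter_add_ncard_exits [Finite V] (hG : G.IsBipartiteWith A B)
    (hM : M.IsPerfectMatching) (X : Set V) :
    (X ∩ A).ncard + (exits M X ∩ B).ncard = (X ∩ B).ncard + (exits M X ∩ A).ncard := by
  have hin : ((X \ exits M X) ∩ A).ncard = ((X \ exits M X) ∩ B).ncard :=
    hM.ncard_eq_of_adj_mem (fun _ hv _ ↦ mem_diff_exits_inter_of_adj hG hM.1 hv)
      (fun _ hw _ ↦ mem_diff_exits_inter_of_adj hG.symm hM.1 hw)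
  have hsplit (C : Set V) :
      (X ∩ C).ncard = (exits M X ∩ C).ncard + ((X \ exits M X) ∩ C).ncard := by
    rw [← Set.ncard_inter_add_ncard_sdiff_eq_ncard (X ∩ C) (exits M X)]
    have hE := exits_subset M X
    congr 2 <;> ext v <;> have := @hE v <;> simp only [Set.mem_inter_iff, Set.mem_sdiff] <;> tauto
  rw [hsplit A, hsplit B]
  omega

end Bipartite

section Cycle

open Relation

lemma exists_walk_of_reflTransGen {r : V → V → Prop} (hr : ∀ ⦃u v⦄, r u v → G.Adj u v)
    {u v : V} (h : ReflTransGen r u v) : ∃ p : G.Walk u v, ∀ d ∈ p.darts, r d.fst d.snd := by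
  induction h using ReflTransGen.head_induction_on with
  | refl => exact ⟨.nil, by simp⟩
  | head huw _ ih =>
    obtain ⟨p, hp⟩ := ih
    exact ⟨.cons (hr huw) p, by simpa [huw] using hp⟩

lemma exists_isCycle_of_reflTransGen [DecidableEq V] {r : V → V → Prop}
    (hr : ∀ ⦃u v⦄, r u v → G.Adj u v) {a b : V} (hab : r a b) (hba : ¬ r b a)
    (h : ReflTransGen r b a) :
    ∃ c : G.Walk a a, c.IsCycle ∧ s(a, b) ∈ c.edges ∧ ∀ d ∈ c.darts, r d.fst d.snd := by
  obtain ⟨p, hp⟩ := exists_walk_of_reflTransGen hr h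
  have hq := p.bypass_isPath
  have hqd (d) (hd : d ∈ p.bypass.darts) : r d.fst d.snd := hp d (p.darts_bypass_subset_darts hd)
  refine ⟨.cons (hr hab) p.bypass, (Walk.cons_isCycle_iff _ _).mpr ⟨hq, fun hmem ↦ ?_⟩,
    by simp, by simpa [hab] using hqd⟩
  obtain ⟨d, hd, hde⟩ := List.mem_map.mp hmem
  rcases dart_edge_eq_mk'_iff.mp hde with hd' | hd'
  · -- a path ending at `a` has no dart leaving `a`
    have hnd := hq.support_nodup
    rw [← p.bypass.dropLast_support_concat] at hnd
    refine List.disjoint_of_nodup_append hnd ?_ (List.mem_singleton_self a)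
    rw [← Walk.map_fst_darts]
    exact List.mem_map.mpr ⟨d, hd, by simp [hd']⟩
  · exact hba (by simpa [hd'] using hqd d hd)

variable {A B : Set V} {M : G.Subgraph}

theorem isAlternating_of_isCycle (hG : G.IsBipartiteWith A B) (hM : M.IsMatching) {u : V}
    {c : G.Walk u u} (hc : c.IsCycle)
    (hcM : ∀ d ∈ c.darts, (M.Adj d.fst d.snd ↔ d.fst ∈ A)) :
    c.toSubgraph.spanningCoe.IsAlternating M.spanningCoe := by
  intro v w w' hww' hw hw'
  simp only [Subgraph.spanningCoe_adj, Walk.adj_toSubgraph_iff_mem_edges] at hw hw' ⊢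
  refine ⟨fun h h' ↦ hww' (hM.eq_of_adj_left h h'), fun h' ↦ by_contra fun h ↦ hww' ?_⟩
  -- a dart of `c` outside `M` runs from `B` into `A`, so two of them cannot share an end `v`
  have hdart (x) (hx : s(v, x) ∈ c.edges) (hvx : ¬ M.Adj v x) : ∃ d ∈ c.darts,
      (d.fst = v ∧ d.snd = x ∧ v ∉ A) ∨ (d.fst = x ∧ d.snd = v ∧ v ∈ A) := by
    obtain ⟨d, hd, hde⟩ := List.mem_map.mp hx
    refine ⟨d, hd, ?_⟩
    rcases dart_edge_eq_mk'_iff.mp hde with hd' | hd' <;> have := hcM d hd <;>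
      simp only [Prod.ext_iff] at hd' <;> rw [hd'.1, hd'.2] at this
    · exact .inl ⟨hd'.1, hd'.2, fun hv ↦ hvx (this.mpr hv)⟩
    · have hxA : x ∉ A := fun hx ↦ hvx (this.mpr hx).symm
      have := hG.mem_of_adj (hd'.1 ▸ hd'.2 ▸ d.adj)
      exact .inr ⟨hd'.1, hd'.2, by tauto⟩
  have hfst := List.inj_on_of_nodup_map (c.map_fst_darts ▸ hc.nodup_dropLast_support)
  have hsnd := List.inj_on_of_nodup_map (c.map_snd_darts ▸ hc.support_nodup)
  obtain ⟨d, hd, hdv⟩ := hdart w hw h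
  obtain ⟨d', hd', hdv'⟩ := hdart w' hw' h'
  rcases hdv with ⟨h1, h2, hv⟩ | ⟨h1, h2, hv⟩ <;>
    rcases hdv' with ⟨h1', h2', hv'⟩ | ⟨h1', h2', hv'⟩
  · rw [← h2, ← h2', hfst hd hd' (h1.trans h1'.symm)]
  · exact absurd hv' hv
  · exact absurd hv hv'
  · rw [← h1, ← h1', hsnd hd hd' (h2.trans h2'.symm)]

end Cycle

section Exchange

open Relation
open scoped symmDiff

variable {A B : Set V} {M : G.Subgraph}

/-- The digraph of `M`-alternating paths: `M`-edges are traversed out of `A`, the other edges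
into `A`, and the edge `e` is not used. -/
def AltArc (M : G.Subgraph) (A : Set V) (e : Sym2 V) (u v : V) : Prop :=
  G.Adj u v ∧ s(u, v) ≠ e ∧ (M.Adj u v ↔ u ∈ A)

theorem exists_isPerfectMatching_of_reflTransGen_altArc (hG : G.IsBipartiteWith A B)
    (hM : M.IsPerfectMatching) {a b : V} {e : Sym2 V} (ha : a ∈ A) (hab : M.Adj a b)
    (he : e ∈ M.edgeSet) (hne : s(a, b) ≠ e) (h : ReflTransGen (AltArc M A e) b a) :
    ∃ M' : G.Subgraph, M'.IsPerfectMatching ∧ s(a, b) ∉ M'.edgeSet ∧ e ∈ M'.edgeSet := by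
  classical
  have hb : b ∉ A := Set.disjoint_right.mp hG.disjoint (hG.mem_of_mem_adj ha (M.adj_sub hab))
  obtain ⟨c, hc, habc, hcA⟩ := exists_isCycle_of_reflTransGen (fun _ _ h ↦ h.1)
    ⟨M.adj_sub hab, hne, by simp [hab, ha]⟩ (fun h ↦ hb (h.2.2.mp hab.symm)) h
  set C := c.toSubgraph.spanningCoe
  have hC (x y : V) : C.Adj x y ↔ s(x, y) ∈ c.edges := Walk.adj_toSubgraph_iff_mem_edges
  have hle : M.spanningCoe ∆ C ≤ G :=
    symmDiff_le_sup.trans (sup_le M.spanningCoe_le c.toSubgraph.spanningCoe_le)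
  have hMC := hM.symmDiff_of_isAlternating
    (isAlternating_of_isCycle hG hM.1 hc fun d hd ↦ (hcA d hd).2.2)
    hc.isCycles_spanningCoe_toSubgraph
  refine ⟨G.toSubgraph _ hle, ?_, ?_, ?_⟩
  · rw [Subgraph.isPerfectMatching_iff] at hMC ⊢
    simpa using hMC
  · simp [symmDiff_def, hab, (hC a b).mpr habc]
  · induction e using Sym2.ind with | _ x y => ?_
    have : ¬ C.Adj x y := fun hxy ↦ by
      obtain ⟨d, hd, hde⟩ := List.mem_map.mp ((hC x y).mp hxy)
      exact (hcA d hd).2.1 hde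
    simp [symmDiff_def, this, show M.Adj x y from he]

end Exchange

section Shore

open Relation

variable {A B : Set V} {M : G.Subgraph} {e : Sym2 V} {b v w : V}

def altReach (M : G.Subgraph) (A : Set V) (e : Sym2 V) (b : V) : Set V :=
  {v | ReflTransGen (AltArc M A e) b v}

lemma start_mem_altReach : b ∈ altReach M A e b := ReflTransGen.refl

lemma mem_altReach_of_adj (hv : v ∈ altReach M A e b) (hvA : v ∈ A) (hvw : M.Adj v w)
    (hne : s(v, w) ≠ e) : w ∈ altReach M A e b :=
  ReflTransGen.tail hv ⟨M.adj_sub hvw, hne, by simp [hvw, hvA]⟩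

lemma mem_altReach_of_not_adj (he : e ∈ M.edgeSet) (hv : v ∈ altReach M A e b) (hvA : v ∉ A)
    (hvw : G.Adj v w) (hM : ¬ M.Adj v w) : w ∈ altReach M A e b :=
  ReflTransGen.tail hv ⟨hvw, fun h ↦ hM (by rwa [← h] at he), by simp [hM, hvA]⟩

lemma exists_adj_of_mem_altReach (hG : G.IsBipartiteWith A B) (hv : v ∈ altReach M A e b)
    (hvB : v ∈ B) (hvb : v ≠ b) : ∃ u ∈ altReach M A e b, M.Adj u v ∧ s(u, v) ≠ e := by
  obtain rfl | ⟨u, hu, huv, hne, hMuv⟩ := ReflTransGen.cases_tail hv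
  · exact absurd rfl hvb
  · exact ⟨u, hu, hMuv.mpr (hG.mem_of_mem_adj' hvB huv), hne⟩

lemma mem_altReach_of_adj_of_mem_right (hG : G.IsBipartiteWith A B) (hM : M.IsMatching)
    (hv : v ∈ altReach M A e b) (hvB : v ∈ B) (hvb : v ≠ b) (hvw : M.Adj v w) :
    w ∈ altReach M A e b := by
  obtain ⟨u, hu, huv, -⟩ := exists_adj_of_mem_altReach hG hv hvB hvb
  rwa [hM.eq_of_adj_left hvw huv.symm]

lemma notMem_altReach_of_adj (hG : G.IsBipartiteWith A B) (hM : M.IsMatching) {a : V}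
    (hab : M.Adj a v) (hvB : v ∈ B) (hvb : v ≠ b) : v ∉ altReach M A s(a, v) b := by
  intro hv
  obtain ⟨u, -, huv, hne⟩ := exists_adj_of_mem_altReach hG hv hvB hvb
  exact hne (by rw [hM.eq_of_adj_right huv hab])

lemma eq_of_mem_exits_altReach (hG : G.IsBipartiteWith A B) (hM : M.IsMatching)
    (he : e ∈ M.edgeSet) {a : V} (hab : M.Adj a b) (M' : G.Subgraph)
    (hv : v ∈ exits M' (altReach M A e b)) (hvB : v ∈ B) : v = b ∧ M'.Adj a b := by
  obtain ⟨hvX, w, hwX, hvw⟩ := hv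
  have hMvw : M.Adj v w := by_contra fun h ↦
    hwX (mem_altReach_of_not_adj he hvX (Set.disjoint_right.mp hG.disjoint hvB) (M'.adj_sub hvw) h)
  obtain rfl : v = b := by_contra fun hvb ↦
    hwX (mem_altReach_of_adj_of_mem_right hG hM hvX hvB hvb hMvw)
  exact ⟨rfl, (hM.eq_of_adj_left hMvw hab.symm ▸ hvw).symm⟩

end Shore

section Counting

variable [Finite V] {A B : Set V} {M0 : G.Subgraph} {a1 b1 a2 b2 : V}

theorem ncard_eq_ncard_of_isPerfectMatching (hG : G.IsBipartiteWith A B) {M : G.Subgraph}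
    (hM : M.IsPerfectMatching) : A.ncard = B.ncard := by
  simpa [exits] using ncard_inter_add_ncard_exits hG hM Set.univ

lemma ncard_compl_inter_eq {X : Set V} (hX : (X ∩ A).ncard = (X ∩ B).ncard)
    (hAB : A.ncard = B.ncard) : (Xᶜ ∩ A).ncard = (Xᶜ ∩ B).ncard := by
  have hA := Set.ncard_inter_add_ncard_sdiff_eq_ncard A X
  have hB := Set.ncard_inter_add_ncard_sdiff_eq_ncard B X
  rw [Set.sdiff_eq, Set.inter_comm A, Set.inter_comm A] at hA
  rw [Set.sdiff_eq, Set.inter_comm B, Set.inter_comm B] at hB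
  omega

theorem mem_altReach_and_ncard_eq (hG : G.IsBipartiteWith A B) (hM0 : M0.IsPerfectMatching)
    (h1 : M0.Adj a1 b1) (h2 : M0.Adj a2 b2) (ha1 : a1 ∈ A) (ha2 : a2 ∈ A)
    (hX : a1 ∉ altReach M0 A s(a2, b2) b1) {M1 : G.Subgraph} (hM1 : M1.IsPerfectMatching)
    (hM1a : ¬ M1.Adj a1 b1) :
    a2 ∈ altReach M0 A s(a2, b2) b1 ∧
      (altReach M0 A s(a2, b2) b1 ∩ A).ncard = (altReach M0 A s(a2, b2) b1 ∩ B).ncard := by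
  set X := altReach M0 A s(a2, b2) b1
  have hexit (M : G.Subgraph) {v : V} (hv : v ∈ exits M X ∩ B) : v = b1 ∧ M.Adj a1 b1 :=
    eq_of_mem_exits_altReach hG hM0.1 h2 h1 M hv.1 hv.2
  have h0B : exits M0 X ∩ B = {b1} :=
    Set.Subset.antisymm (fun _ hv ↦ (hexit M0 hv).1) <| Set.singleton_subset_iff.mpr
      ⟨⟨start_mem_altReach, a1, hX, h1.symm⟩, hG.mem_of_mem_adj ha1 (M0.adj_sub h1)⟩
  have h1B : exits M1 X ∩ B = ∅ :=
    Set.eq_empty_of_forall_notMem fun _ hv ↦ hM1a (hexit M1 hv).2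
  have h0A : exits M0 X ∩ A ⊆ {a2} := by
    rintro v ⟨⟨hvX, w, hwX, hvw⟩, hvA⟩
    by_contra hva
    refine hwX (mem_altReach_of_adj hvX hvA hvw fun h ↦ ?_)
    rcases Sym2.eq_iff.mp h with ⟨rfl, -⟩ | ⟨rfl, rfl⟩
    · exact hva rfl
    · exact Set.disjoint_left.mp hG.disjoint hvA (hG.mem_of_mem_adj ha2 (M0.adj_sub h2))
  have c0 := ncard_inter_add_ncard_exits hG hM0 X
  have c1 := ncard_inter_add_ncard_exits hG hM1 X
  have hle := Set.ncard_le_ncard h0A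
  rw [h0B, Set.ncard_singleton] at c0
  rw [h1B, Set.ncard_empty] at c1
  rw [Set.ncard_singleton] at hle
  obtain ⟨v, hv⟩ := Set.nonempty_of_ncard_ne_zero (by omega : (exits M0 X ∩ A).ncard ≠ 0)
  exact ⟨h0A hv ▸ hv.1.1, by omega⟩

theorem cutEdges_altReach (hG : G.IsBipartiteWith A B) (hM0 : M0.IsPerfectMatching)
    (h1 : M0.Adj a1 b1) (h2 : M0.Adj a2 b2) (ha2 : a2 ∈ A)
    (hX : a1 ∉ altReach M0 A s(a2, b2) b1) (ha2X : a2 ∈ altReach M0 A s(a2, b2) b1)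
    (hbal : (altReach M0 A s(a2, b2) b1 ∩ A).ncard = (altReach M0 A s(a2, b2) b1 ∩ B).ncard)
    (hcov : ∀ e ∈ G.edgeSet, ∃ M : G.Subgraph, M.IsPerfectMatching ∧ e ∈ M.edgeSet)
    (hdep : ∀ M : G.Subgraph, M.IsPerfectMatching → M.Adj a1 b1 → M.Adj a2 b2) :
    cutEdges G (altReach M0 A s(a2, b2) b1) = {s(a1, b1), s(a2, b2)} := by
  set X := altReach M0 A s(a2, b2) b1
  have hb2X : b2 ∉ X := by
    refine notMem_altReach_of_adj hG hM0.1 h2 (hG.mem_of_mem_adj ha2 (M0.adj_sub h2)) fun hb ↦ ?_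
    exact hX (hM0.1.eq_of_adj_right h1 (hb ▸ h2) ▸ ha2X)
  have hexit (M : G.Subgraph) {v : V} (hv : v ∈ exits M X) (hvB : v ∈ B) :
      v = b1 ∧ M.Adj a1 b1 :=
    eq_of_mem_exits_altReach hG hM0.1 h2 h1 M hv hvB
  ext e
  constructor
  · rintro ⟨he, x, y, rfl, hxX, hyX⟩
    obtain ⟨M, hM, hxy⟩ := hcov _ he
    replace hxy : M.Adj x y := hxy
    have hxE : x ∈ exits M X := ⟨hxX, y, hyX, hxy⟩
    rcases hG.mem_of_adj he with ⟨hxA, -⟩ | ⟨hxB, -⟩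
    · -- `M` leaves `X` from `A`, so by the count it also leaves `X` at `b1`, hence uses `a2b2`
      have hc := ncard_inter_add_ncard_exits hG hM X
      have hsub : exits M X ∩ B ⊆ {b1} := fun v hv ↦ (hexit M hv.1 hv.2).1
      have hle := (Set.ncard_le_ncard hsub).trans_eq (Set.ncard_singleton b1)
      have hpos : 0 < (exits M X ∩ A).ncard :=
        (Set.ncard_pos (Set.toFinite _)).mpr ⟨x, hxE, hxA⟩
      obtain ⟨v, hv⟩ := Set.nonempty_of_ncard_ne_zero (by omega : (exits M X ∩ B).ncard ≠ 0)
      have hMa2 := hdep M hM (hexit M hv.1 hv.2).2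
      have ha2E : a2 ∈ exits M X ∩ A := ⟨⟨ha2X, b2, hb2X, hMa2⟩, ha2⟩
      obtain rfl : x = a2 :=
        (Set.ncard_le_one (s := exits M X ∩ A)).mp (by omega) x ⟨hxE, hxA⟩ a2 ha2E
      rw [hM.1.eq_of_adj_left hxy hMa2]
      exact .inr rfl
    · obtain ⟨rfl, hMa1⟩ := hexit M hxE hxB
      rw [hM.1.eq_of_adj_left hxy hMa1.symm]
      exact .inl Sym2.eq_swap
  · rintro (rfl | rfl)
    · exact ⟨M0.adj_sub h1, b1, a1, Sym2.eq_swap, start_mem_altReach, hX⟩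
    · exact ⟨M0.adj_sub h2, a2, b2, rfl, ha2X, hb2X⟩

end Counting

lemma MatchingCovered.exists_isPerfectMatching_not_adj (hmc : MatchingCovered G) {a b c : V}
    (hca : c ≠ a) (hcb : c ≠ b) :
    ∃ M : G.Subgraph, M.IsPerfectMatching ∧ ¬ M.Adj a b := by
  obtain ⟨p⟩ := hmc.1.preconnected a c
  obtain ⟨d, -, hd, hd'⟩ := p.exists_boundary_dart {a, b} (by simp) (by simp [hca, hcb])
  obtain ⟨M, hM, hdM⟩ := hmc.2.2 d.edge d.edge_mem
  refine ⟨M, hM, fun hMab ↦ hd' ?_⟩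
  have hdM : M.Adj d.fst d.snd := hdM
  rcases hd with hd | hd <;> rw [hd] at hdM
  · simp [hM.1.eq_of_adj_left hdM hMab]
  · simp [hM.1.eq_of_adj_left hdM hMab.symm]

lemma exists_eq_mk_of_mem_edgeSet {A B : Set V} (hG : G.IsBipartiteWith A B) {e : Sym2 V}
    (he : e ∈ G.edgeSet) : ∃ a ∈ A, ∃ b, e = s(a, b) := by
  induction e using Sym2.ind with | _ x y => ?_
  rcases hG.mem_of_adj he with ⟨hx, -⟩ | ⟨-, hy⟩
  · exact ⟨x, hx, y, rfl⟩
  · exact ⟨y, hy, x, Sym2.eq_swap⟩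

theorem stmt4_general {V : Type*} [Fintype V] (G : SimpleGraph V)
    (A B : Set V) (hdisj : Disjoint A B)
    (hbip : ∀ x y : V, G.Adj x y → (x ∈ A ∧ y ∈ B) ∨ (x ∈ B ∧ y ∈ A))
    (hmc : MatchingCovered G)
    (e1 e2 : Sym2 V) (hne : e1 ≠ e2) (hdep : MutuallyDependent G e1 e2) :
    ∃ X : Set V, X.Nonempty ∧ X ≠ Set.univ ∧
      cutEdges G X = {e1, e2} ∧
      (X ∩ A).ncard = (X ∩ B).ncard ∧ (Xᶜ ∩ A).ncard = (Xᶜ ∩ B).ncard := by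
  have hG : G.IsBipartiteWith A B := ⟨hdisj, hbip⟩
  obtain ⟨he1, he2, hdep⟩ := hdep
  obtain ⟨a1, ha1, b1, rfl⟩ := exists_eq_mk_of_mem_edgeSet hG he1
  obtain ⟨a2, ha2, b2, rfl⟩ := exists_eq_mk_of_mem_edgeSet hG he2
  obtain ⟨M0, hM0, h1⟩ := hmc.2.2 _ he1
  replace h1 : M0.Adj a1 b1 := h1
  have h2 : M0.Adj a2 b2 := (hdep M0 hM0).mp h1
  set X := altReach M0 A s(a2, b2) b1
  have hX : a1 ∉ X := fun h ↦ by
    obtain ⟨M, hM, h1M, h2M⟩ :=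
      exists_isPerfectMatching_of_reflTransGen_altArc hG hM0 ha1 h1 h2 hne h
    exact h1M ((hdep M hM).mpr h2M)
  have ha12 : a2 ≠ a1 := fun h ↦ hne (by rw [h, hM0.1.eq_of_adj_left h1 (h ▸ h2)])
  have ha2b1 : a2 ≠ b1 := fun h ↦
    Set.disjoint_left.mp hdisj ha2 (h ▸ hG.mem_of_mem_adj ha1 he1)
  obtain ⟨M1, hM1, hM1a⟩ := hmc.exists_isPerfectMatching_not_adj ha12 ha2b1
  obtain ⟨ha2X, hbal⟩ := mem_altReach_and_ncard_eq hG hM0 h1 h2 ha1 ha2 hX hM1 hM1a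
  refine ⟨X, ⟨b1, start_mem_altReach⟩, fun h ↦ hX (h ▸ Set.mem_univ a1),
    cutEdges_altReach hG hM0 h1 h2 ha2 hX ha2X hbal hmc.2.2 fun M hM ↦ (hdep M hM).mp, hbal,
    ncard_compl_inter_eq hbal (ncard_eq_ncard_of_isPerfectMatching hG hM0)⟩

/-- In a bipartite matching covered graph `G` with bipartition `(A, B)`,
two distinct mutually dependent edges `e1, e2` form a 2-edge-cut separating `G` into two
balanced parts. -/
theorem stmt4 {V : Type*} [Fintype V] (G : SimpleGraph V)
    (A B : Set V) (hdisj : Disjoint A B) (hcover : A ∪ B = Set.univ)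
    (hbip : ∀ x y : V, G.Adj x y → (x ∈ A ∧ y ∈ B) ∨ (x ∈ B ∧ y ∈ A))
    (hmc : MatchingCovered G)
    (e1 e2 : Sym2 V) (hne : e1 ≠ e2) (hdep : MutuallyDependent G e1 e2) :
    ∃ X : Set V, X.Nonempty ∧ X ≠ Set.univ ∧
      cutEdges G X = {e1, e2} ∧
      (X ∩ A).ncard = (X ∩ B).ncard ∧ (Xᶜ ∩ A).ncard = (Xᶜ ∩ B).ncard :=
  stmt4_general G A B hdisj hbip hmc e1 e2 hne hdep

end Paper
end

section
/- Let G be a cubic brick. If there exist two edges e and f of G such that G − {e, f} is bipartite, then G − {e, f} is matching covered; consequently G is near-bipartite. -/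
namespace Paper

open SimpleGraph

variable {V : Type*}

/-!
Let `A` be a colour class of `H = G - {e, f}`. In the cubic graph `G`, a shore `X` with `i(X)`
inner edges satisfies `3 |X| = 2 i(X) + |∂X|`; applied to `A` and `Aᶜ` this forces `e` to lie
inside `A`, `f` inside `Aᶜ` (up to renaming) and `|A| = |Aᶜ|`. The same count in a perfect
matching shows that it contains both of `e, f` or neither.

The brick hypothesis enters through one fact: an even shore `X` with `|X| ≥ 3` has at least three
cut edges, since if `∂X` has at most two edges and `xy ∈ ∂X` with `x ∈ X`, parity makes `∂(X - x)`
a nontrivial tight cut. A component of `H` would violate this (its cut lies in `{e, f}`), so `H` is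
connected; and a set `∅ ≠ S ⊊ A` with `|N_H(S)| ≤ |S|` would violate it with `X = S ∪ N_H(S)`,
by the degree count. So `H` satisfies Hall's condition with surplus on both sides, and Hall's
theorem applied to `H - u - v + uv` puts every edge `uv` of `H` in a perfect matching.
-/

lemma cutEdges_compl (G : SimpleGraph V) (X : Set V) : cutEdges G Xᶜ = cutEdges G X := by
  ext ε
  constructor <;> rintro ⟨hε, x, y, rfl, hx, hy⟩
  · exact ⟨hε, y, x, Sym2.eq_swap, not_not.1 hy, hx⟩
  · exact ⟨hε, y, x, Sym2.eq_swap, hy, not_not.2 hx⟩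

lemma edgeSet_between (G : SimpleGraph V) (X Y : Set V) :
    (G.between X Y).edgeSet = betweenEdges G X Y := by
  ext ε
  induction ε using Sym2.ind with
  | _ u v =>
    simp only [mem_edgeSet, between_adj, betweenEdges, Set.mem_ofPred_eq, Sym2.eq_iff]
    constructor
    · rintro ⟨h, ⟨hu, hv⟩ | ⟨hu, hv⟩⟩
      · exact ⟨h, u, hu, v, hv, Or.inl ⟨rfl, rfl⟩⟩
      · exact ⟨h, v, hv, u, hu, Or.inr ⟨rfl, rfl⟩⟩
    · rintro ⟨h, x, hx, y, hy, ⟨rfl, rfl⟩ | ⟨rfl, rfl⟩⟩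
      · exact ⟨h, Or.inl ⟨hx, hy⟩⟩
      · exact ⟨h, Or.inr ⟨hy, hx⟩⟩

lemma edgeSet_between_compl (G : SimpleGraph V) (X : Set V) :
    (G.between X Xᶜ).edgeSet = cutEdges G X := by
  rw [edgeSet_between]
  ext ε
  constructor
  · rintro ⟨h, x, hx, y, hy, rfl⟩
    exact ⟨h, x, y, rfl, hx, hy⟩
  · rintro ⟨h, x, y, rfl, hx, hy⟩
    exact ⟨h, x, hx, y, hy, rfl⟩

lemma mem_of_mk_mem_betweenEdges_self {G : SimpleGraph V} {X : Set V} {x y : V}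
    (h : s(x, y) ∈ betweenEdges G X X) : x ∈ X := by
  obtain ⟨-, u, hu, w, hw, huw⟩ := h
  rcases Sym2.eq_iff.1 huw with ⟨rfl, -⟩ | ⟨rfl, -⟩
  exacts [hu, hw]

lemma disjoint_betweenEdges_cutEdges (G : SimpleGraph V) (X : Set V) :
    Disjoint (betweenEdges G X X) (cutEdges G X) := by
  rw [Set.disjoint_left]
  rintro _ h ⟨-, x, y, rfl, -, hy⟩
  rw [Sym2.eq_swap] at h
  exact hy (mem_of_mk_mem_betweenEdges_self h)

lemma disjoint_betweenEdges_compl (G : SimpleGraph V) (X : Set V) :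
    Disjoint (betweenEdges G X X) (betweenEdges G Xᶜ Xᶜ) := by
  rw [Set.disjoint_left]
  rintro _ ⟨-, x, hx, y, -, rfl⟩ h
  exact mem_of_mk_mem_betweenEdges_self h hx

lemma mul_ncard_eq_betweenEdges_add_cutEdges [Finite V] {K : SimpleGraph V} {d : ℕ}
    (hK : ∀ v, (K.neighborSet v).ncard = d) (X : Set V) :
    d * X.ncard = 2 * (betweenEdges K X X).ncard + (cutEdges K X).ncard := by
  classical
  have := Fintype.ofFinite V
  have hdeg : ∀ v ∈ X.toFinset,
      d = (K.between X X).degree v + (K.between X Xᶜ).degree v := by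
    intro v hv
    rw [Set.mem_toFinset] at hv
    rw [← hK v, ← card_neighborFinset_eq_degree, ← card_neighborFinset_eq_degree,
      ← Finset.card_union_of_disjoint, Set.ncard_eq_toFinset_card']
    · congr 1
      ext w
      by_cases hw : w ∈ X <;> simp [between_adj, hv, hw]
    · rw [Finset.disjoint_left]
      intro w h1 h2
      simp only [mem_neighborFinset, between_adj] at h1 h2
      tauto
  have hinner : ∑ v ∈ X.toFinset, (K.between X X).degree v = 2 * (betweenEdges K X X).ncard := by
    rw [← edgeSet_between, ← coe_edgeFinset, Set.ncard_coe_finset,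
      ← sum_degrees_eq_twice_card_edges]
    refine Finset.sum_subset (Finset.subset_univ _) fun v _ hv => ?_
    rw [Set.mem_toFinset] at hv
    rw [degree_eq_zero_iff_notMem_support]
    rintro ⟨w, hw⟩
    rcases hw.2 with h | h
    exacts [hv h.1, hv h.1]
  have hcut : ∑ v ∈ X.toFinset, (K.between X Xᶜ).degree v = (cutEdges K X).ncard := by
    rw [← edgeSet_between_compl, ← coe_edgeFinset, Set.ncard_coe_finset]
    refine isBipartiteWith_sum_degrees_eq_card_edges (t := X.toFinsetᶜ) ?_
    simpa using between_isBipartiteWith (G := K) disjoint_compl_right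
  rw [Set.ncard_eq_toFinset_card', ← hinner, ← hcut, ← Finset.sum_add_distrib,
    ← Finset.sum_congr rfl hdeg, Finset.sum_const, smul_eq_mul, mul_comm]

section PerfectMatching

variable {G : SimpleGraph V} {M : G.Subgraph}

lemma ncard_neighborSet_spanningCoe (hM : M.IsPerfectMatching) (v : V) :
    (M.spanningCoe.neighborSet v).ncard = 1 := by
  obtain ⟨w, hw, huniq⟩ := Subgraph.isPerfectMatching_iff.1 hM v
  exact Set.ncard_eq_one.2 ⟨w, Set.ext fun u => ⟨huniq u, fun h => h ▸ hw⟩⟩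

lemma betweenEdges_spanningCoe (M : G.Subgraph) (X Y : Set V) :
    betweenEdges M.spanningCoe X Y = M.edgeSet ∩ betweenEdges G X Y := by
  ext ε
  simp only [betweenEdges, Subgraph.edgeSet_spanningCoe, Set.mem_ofPred_eq, Set.mem_inter_iff]
  exact ⟨fun ⟨h, rest⟩ => ⟨h, M.edgeSet_subset h, rest⟩, fun ⟨h, _, rest⟩ => ⟨h, rest⟩⟩

lemma cutEdges_spanningCoe (M : G.Subgraph) (X : Set V) :
    cutEdges M.spanningCoe X = M.edgeSet ∩ cutEdges G X := by
  ext ε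
  simp only [cutEdges, Subgraph.edgeSet_spanningCoe, Set.mem_ofPred_eq, Set.mem_inter_iff]
  exact ⟨fun ⟨h, rest⟩ => ⟨h, M.edgeSet_subset h, rest⟩, fun ⟨h, _, rest⟩ => ⟨h, rest⟩⟩

/-- Deleting `x` from `X` toggles the `M`-edge `s(x, m)` at `x` between inside and cut. -/
lemma mem_inter_cutEdges_sdiff_singleton (hM : M.IsPerfectMatching) {X : Set V} {x m : V}
    (hm : M.Adj x m) {ε : Sym2 V} (hε : ε ∈ M.edgeSet ∩ cutEdges G (X \ {x})) :
    (ε = s(m, x) ∧ m ∈ X) ∨ (ε ∈ M.edgeSet ∩ cutEdges G X ∧ ε ≠ s(x, m)) := by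
  obtain ⟨hεM, hεG, p, q, rfl, hp, hq⟩ := hε
  by_cases hqx : q = x
  · subst hqx
    obtain rfl := hM.1.eq_of_adj_left hm (Subgraph.mem_edgeSet.1 hεM).symm
    exact Or.inl ⟨rfl, hp.1⟩
  · refine Or.inr ⟨⟨hεM, hεG, p, q, rfl, hp.1, fun h => hq ⟨h, hqx⟩⟩, ?_⟩
    rw [Ne, Sym2.eq_iff]
    rintro (⟨h, -⟩ | ⟨-, h⟩)
    exacts [hp.2 h, hqx h]

variable [Finite V]

lemma even_ncard_iff_even_ncard_inter_cutEdges (hM : M.IsPerfectMatching) (X : Set V) :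
    Even X.ncard ↔ Even (M.edgeSet ∩ cutEdges G X).ncard := by
  have h := mul_ncard_eq_betweenEdges_add_cutEdges (ncard_neighborSet_spanningCoe hM) X
  rw [one_mul, cutEdges_spanningCoe] at h
  rw [h, Nat.even_add]
  simp

lemma inter_cutEdges_eq_empty_or_subset (hM : M.IsPerfectMatching) {X : Set V}
    (hX : Even X.ncard) (hcut : (cutEdges G X).ncard ≤ 2) :
    M.edgeSet ∩ cutEdges G X = ∅ ∨ cutEdges G X ⊆ M.edgeSet := by
  rw [or_iff_not_imp_left, ← Ne, ← Set.nonempty_iff_ne_empty]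
  intro hne
  obtain ⟨k, hk⟩ := (even_ncard_iff_even_ncard_inter_cutEdges hM X).1 hX
  have hpos := (Set.ncard_pos (Set.toFinite _)).2 hne
  have hle := Set.ncard_le_ncard (Set.inter_subset_right (s := M.edgeSet) (t := cutEdges G X))
  have heq : M.edgeSet ∩ cutEdges G X = cutEdges G X :=
    Set.eq_of_subset_of_ncard_le Set.inter_subset_right (by omega)
  exact heq ▸ Set.inter_subset_left

lemma ncard_inter_cutEdges_sdiff_singleton_le_one (hM : M.IsPerfectMatching) {X : Set V}
    (hX : Even X.ncard) (hcut : (cutEdges G X).ncard ≤ 2) {x y : V}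
    (hxy : s(x, y) ∈ cutEdges G X) (hx : x ∈ X) (hy : y ∉ X) :
    (M.edgeSet ∩ cutEdges G (X \ {x})).ncard ≤ 1 := by
  obtain ⟨m, hm, -⟩ := Subgraph.isPerfectMatching_iff.1 hM x
  by_cases hmX : m ∈ X
  · have hempty : M.edgeSet ∩ cutEdges G X = ∅ := by
      refine (inter_cutEdges_eq_empty_or_subset hM hX hcut).resolve_right fun hsub => hy ?_
      exact hM.1.eq_of_adj_left hm (Subgraph.mem_edgeSet.1 (hsub hxy)) ▸ hmX
    calc (M.edgeSet ∩ cutEdges G (X \ {x})).ncard ≤ ({s(m, x)} : Set (Sym2 V)).ncard :=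
          Set.ncard_le_ncard fun ε hε => by
            rcases mem_inter_cutEdges_sdiff_singleton hM hm hε with h | h
            exacts [h.1, (hempty.subset h.1).elim]
      _ = 1 := Set.ncard_singleton _
  · have hxm : s(x, m) ∈ M.edgeSet ∩ cutEdges G X := ⟨hm, M.adj_sub hm, x, m, rfl, hx, hmX⟩
    have hle := Set.ncard_le_ncard (Set.inter_subset_right (s := M.edgeSet) (t := cutEdges G X))
    calc (M.edgeSet ∩ cutEdges G (X \ {x})).ncard
        ≤ ((M.edgeSet ∩ cutEdges G X) \ {s(x, m)}).ncard :=
          Set.ncard_le_ncard fun ε hε => by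
            rcases mem_inter_cutEdges_sdiff_singleton hM hm hε with h | h
            exacts [(hmX h.2).elim, h]
      _ ≤ 1 := by
          rw [Set.ncard_sdiff_singleton_of_mem hxm]
          omega

end PerfectMatching

/-- Otherwise, deleting from `X` the end of a cut edge leaves an odd shore whose cut is tight. -/
lemma IsBrick.two_lt_ncard_cutEdges [Finite V] {G : SimpleGraph V} (hG : IsBrick G)
    {X : Set V} (hX : Even X.ncard) (hX3 : 3 ≤ X.ncard) (hXc : Xᶜ.Nonempty) :
    2 < (cutEdges G X).ncard := by
  by_contra! hcut
  obtain ⟨x, y, hxy, hx, hy⟩ : ∃ x y, G.Adj x y ∧ x ∈ X ∧ y ∉ X := by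
    obtain ⟨u, hu⟩ := Set.nonempty_of_ncard_ne_zero (s := X) (by omega)
    obtain ⟨z, hz⟩ := hXc
    obtain ⟨d, -, hd1, hd2⟩ := (hG.1.1.preconnected u z).some.exists_boundary_dart X hu hz
    exact ⟨_, _, d.adj, hd1, hd2⟩
  have hWcard : (X \ {x}).ncard + 1 = X.ncard := Set.ncard_sdiff_singleton_add_one hx
  have htight : IsTightCut G (X \ {x}) := by
    intro M hM
    have hle := ncard_inter_cutEdges_sdiff_singleton_le_one hM hX hcut ⟨hxy, x, y, rfl, hx, hy⟩
      hx hy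
    have hodd := (even_ncard_iff_even_ncard_inter_cutEdges hM (X \ {x})).not
    rw [Nat.not_even_iff_odd, Nat.not_even_iff_odd] at hodd
    obtain ⟨j, hj⟩ := hodd.1 (by rcases hX with ⟨k, hk⟩; exact ⟨k - 1, by omega⟩)
    omega
  rcases hG.2.2 _ htight with ⟨w, hw⟩ | ⟨w, hw⟩
  · rw [hw, Set.ncard_singleton] at hWcard
    omega
  · obtain ⟨z, hz⟩ := hXc
    have hxW : x ∈ (X \ {x})ᶜ := fun h => h.2 rfl
    have hzW : z ∈ (X \ {x})ᶜ := fun h => hz h.1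
    rw [hw, Set.mem_singleton_iff] at hxW hzW
    exact hz (hzW.trans hxW.symm ▸ hx)

section Hall

variable {K : SimpleGraph V} {P : Set V} {u v : V}

def HasPositiveSurplus (K : SimpleGraph V) (P : Set V) : Prop :=
  ∀ S ⊆ P, S.Nonempty → S ≠ P → S.ncard < (⋃ x ∈ S, K.neighborSet x).ncard

/-- `K - u - v + uv`: its perfect matchings are the perfect matchings of `K` through `uv`. -/
def pinEdge (K : SimpleGraph V) (u v : V) : SimpleGraph V where
  Adj x y := K.Adj x y ∧ (x = u ↔ y = v) ∧ (x = v ↔ y = u)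
  symm := ⟨fun _ _ h => ⟨h.1.symm, h.2.2.symm, h.2.1.symm⟩⟩
  loopless := ⟨fun x h => K.loopless.irrefl x h.1⟩

lemma pinEdge_le : pinEdge K u v ≤ K := fun _ _ h => h.1

lemma pinEdge_comm : pinEdge K u v = pinEdge K v u := by
  ext x y
  exact ⟨fun h => ⟨h.1, h.2.2, h.2.1⟩, fun h => ⟨h.1, h.2.2, h.2.1⟩⟩

variable [Finite V]

lemma ncard_le_ncard_iUnion_neighborSet_pinEdge (hK : K.IsBipartiteWith P Pᶜ)
    (hP : HasPositiveSurplus K P) (hu : u ∈ P) (huv : K.Adj u v) {S : Set V} (hS : S ⊆ P) :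
    S.ncard ≤ (⋃ x ∈ S, (pinEdge K u v).neighborSet x).ncard := by
  have hv : v ∉ P := hK.mem_of_mem_adj hu huv
  set N := ⋃ x ∈ S \ {u}, K.neighborSet x
  have hsub : N \ {v} ⊆ ⋃ x ∈ S, (pinEdge K u v).neighborSet x := by
    rintro y ⟨hy, hyv⟩
    simp only [N, Set.mem_iUnion] at hy
    obtain ⟨x, ⟨hxS, hxu⟩, hxy⟩ := hy
    have hyP : y ∉ P := hK.mem_of_mem_adj (hS hxS) hxy
    refine Set.mem_biUnion hxS ⟨hxy, iff_of_false hxu hyv, iff_of_false ?_ ?_⟩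
    · rintro rfl
      exact hv (hS hxS)
    · rintro rfl
      exact hyP hu
  have hN : (S \ {u}).Nonempty → (S \ {u}).ncard < N.ncard := fun h =>
    hP _ (Set.sdiff_subset.trans hS) h fun h' => (h' ▸ hu : u ∈ S \ {u}).2 rfl
  have hNv := Set.ncard_le_ncard_sdiff_add_ncard N {v}
  rw [Set.ncard_singleton] at hNv
  by_cases huS : u ∈ S
  · have hvN : v ∈ ⋃ x ∈ S, (pinEdge K u v).neighborSet x :=
      Set.mem_biUnion huS ⟨huv, iff_of_true rfl rfl, eq_comm⟩
    have hins := Set.ncard_le_ncard (Set.insert_subset hvN hsub)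
    rw [Set.ncard_insert_of_notMem fun h => h.2 rfl] at hins
    have hcard := Set.ncard_sdiff_singleton_add_one huS
    rcases (S \ {u}).eq_empty_or_nonempty with h | h
    · rw [h, Set.ncard_empty] at hcard
      omega
    · have := hN h
      omega
  · rw [Set.sdiff_singleton_eq_self huS] at hN
    rcases S.eq_empty_or_nonempty with h | h
    · simp [h]
    · have := hN h
      have := Set.ncard_le_ncard hsub
      omega

lemma ncard_le_ncard_iUnion_neighborSet (hK : K.IsBipartiteWith P Pᶜ)
    (hP : ∀ S ⊆ P, S.ncard ≤ (⋃ x ∈ S, K.neighborSet x).ncard)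
    (hPc : ∀ S ⊆ Pᶜ, S.ncard ≤ (⋃ x ∈ S, K.neighborSet x).ncard) (S : Set V) :
    S.ncard ≤ (⋃ x ∈ S, K.neighborSet x).ncard := by
  have hdisj : Disjoint (⋃ x ∈ S ∩ P, K.neighborSet x) (⋃ x ∈ S ∩ Pᶜ, K.neighborSet x) := by
    refine Set.disjoint_left.2 fun y hy1 hy2 => ?_
    simp only [Set.mem_iUnion] at hy1 hy2
    obtain ⟨x₁, hx₁, hy1⟩ := hy1
    obtain ⟨x₂, hx₂, hy2⟩ := hy2
    exact hK.mem_of_mem_adj hx₁.2 hy1 (hK.mem_of_mem_adj' hx₂.2 hy2.symm)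
  calc S.ncard = (S ∩ P).ncard + (S ∩ Pᶜ).ncard := by
        rw [← Set.sdiff_eq, Set.ncard_inter_add_ncard_sdiff_eq_ncard]
    _ ≤ _ := add_le_add (hP _ Set.inter_subset_right) (hPc _ Set.inter_subset_right)
    _ = _ := (Set.ncard_union_eq hdisj).symm
    _ ≤ _ := Set.ncard_le_ncard (Set.union_subset
        (Set.biUnion_subset_biUnion_left Set.inter_subset_left)
        (Set.biUnion_subset_biUnion_left Set.inter_subset_left))

lemma exists_isPerfectMatching_mem_edgeSet (hK : K.IsBipartiteWith P Pᶜ)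
    (hP : HasPositiveSurplus K P) (hPc : HasPositiveSurplus K Pᶜ) (hu : u ∈ P)
    (huv : K.Adj u v) : ∃ M : K.Subgraph, M.IsPerfectMatching ∧ s(u, v) ∈ M.edgeSet := by
  classical
  have := Fintype.ofFinite V
  have hKc : K.IsBipartiteWith Pᶜ Pᶜᶜ := by rw [compl_compl]; exact hK.symm
  have hpin : (pinEdge K u v).IsBipartiteWith P Pᶜ :=
    ⟨hK.disjoint, fun _ _ h => hK.mem_of_adj h.1⟩
  have hall := ncard_le_ncard_iUnion_neighborSet hpin
    (fun _ => ncard_le_ncard_iUnion_neighborSet_pinEdge hK hP hu huv)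
    (fun _ => pinEdge_comm (K := K) ▸
      ncard_le_ncard_iUnion_neighborSet_pinEdge hKc hPc (hK.mem_of_mem_adj hu huv) huv.symm)
  obtain ⟨M, hM⟩ := exists_isPerfectMatching_of_forall_ncard_le hpin hall
  obtain ⟨w, hw, -⟩ := Subgraph.isPerfectMatching_iff.1 hM u
  obtain rfl : w = v := (M.adj_sub hw).2.1.1 rfl
  refine ⟨M.map (Hom.ofLE pinEdge_le), ⟨hM.1.map_ofLE pinEdge_le, fun x => by simpa using hM.2 x⟩,
    by simpa using hw⟩

end Hall

lemma ncard_pair_le {α : Type*} (a b : α) : ({a, b} : Set α).ncard ≤ 2 :=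
  (Set.ncard_insert_le a {b}).trans (by rw [Set.ncard_singleton])

/-- `3 |A| - 2 i(A) = |∂A| = 3 |Aᶜ| - 2 i(Aᶜ)` for the numbers `i` of edges inside a shore, so
`i(A) ≡ i(Aᶜ) mod 3`. -/
lemma ncard_betweenEdges_eq_one [Finite V] {G : SimpleGraph V} (hcubic : Cubic G) {A : Set V}
    {e f : Sym2 V} (hA : betweenEdges G A A ⊆ {e, f}) (hAc : betweenEdges G Aᶜ Aᶜ ⊆ {e, f})
    (hne : (betweenEdges G A A ∪ betweenEdges G Aᶜ Aᶜ).Nonempty) :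
    (betweenEdges G A A).ncard = 1 ∧ (betweenEdges G Aᶜ Aᶜ).ncard = 1 := by
  have hpos := (Set.ncard_pos (Set.toFinite _)).2 hne
  have hle := (Set.ncard_le_ncard (Set.union_subset hA hAc)).trans (ncard_pair_le e f)
  rw [Set.ncard_union_eq (disjoint_betweenEdges_compl G A)] at hpos hle
  have h1 := mul_ncard_eq_betweenEdges_add_cutEdges hcubic A
  have h2 := mul_ncard_eq_betweenEdges_add_cutEdges hcubic Aᶜ
  rw [cutEdges_compl] at h2
  generalize (betweenEdges G A A).ncard = i at *
  generalize (betweenEdges G Aᶜ Aᶜ).ncard = j at *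
  have : i ≤ 2 := by omega
  have : j ≤ 2 := by omega
  interval_cases i <;> interval_cases j <;> omega

/-- `A` is a colour class of the bipartite graph `G - {e, f}`, with `e` inside `A` and `f` inside
`Aᶜ`. -/
structure IsNearBipartition (G : SimpleGraph V) (A : Set V) (e f : Sym2 V) : Prop where
  betweenEdges_self : betweenEdges G A A = {e}
  betweenEdges_compl_self : betweenEdges G Aᶜ Aᶜ = {f}

lemma exists_isNearBipartition_of_betweenEdges_subset [Finite V] {G : SimpleGraph V}
    (hcubic : Cubic G) {A : Set V} {e f : Sym2 V} (hA : betweenEdges G A A ⊆ {e, f})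
    (hAc : betweenEdges G Aᶜ Aᶜ ⊆ {e, f})
    (hne : (betweenEdges G A A ∪ betweenEdges G Aᶜ Aᶜ).Nonempty) :
    ∃ A, IsNearBipartition G A e f := by
  obtain ⟨hi, hj⟩ := ncard_betweenEdges_eq_one hcubic hA hAc hne
  obtain ⟨ε, hε⟩ := Set.ncard_eq_one.1 hi
  obtain ⟨ε', hε'⟩ := Set.ncard_eq_one.1 hj
  have hεε' : ε ≠ ε' := by
    rintro rfl
    exact Set.disjoint_left.1 (disjoint_betweenEdges_compl G A) (hε ▸ Set.mem_singleton ε)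
      (hε' ▸ Set.mem_singleton ε)
  have hmem := hA (hε ▸ Set.mem_singleton ε)
  have hmem' := hAc (hε' ▸ Set.mem_singleton ε')
  simp only [Set.mem_insert_iff, Set.mem_singleton_iff] at hmem hmem'
  rcases hmem with rfl | rfl <;> rcases hmem' with rfl | rfl
  · exact (hεε' rfl).elim
  · exact ⟨A, hε, hε'⟩
  · exact ⟨Aᶜ, hε', by rw [compl_compl]; exact hε⟩
  · exact (hεε' rfl).elim

lemma exists_isNearBipartition [Finite V] {G : SimpleGraph V} (hcubic : Cubic G)
    (hG : ¬ G.Colorable 2) {e f : Sym2 V} (hbip : (G.deleteEdges {e, f}).Colorable 2) :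
    ∃ A, IsNearBipartition G A e f := by
  obtain ⟨c⟩ := hbip
  set A : Set V := {v | c v = 0}
  have hclass (B : Set V) (hB : ∀ x ∈ B, ∀ y ∈ B, c x = c y) : betweenEdges G B B ⊆ {e, f} := by
    rintro _ ⟨hadj, x, hx, y, hy, rfl⟩
    by_contra hxy
    exact c.valid (deleteEdges_adj.2 ⟨hadj, hxy⟩) (hB x hx y hy)
  refine exists_isNearBipartition_of_betweenEdges_subset hcubic
    (hclass A fun x hx y hy => hx.trans hy.symm) (hclass Aᶜ fun x hx y hy => ?_) ?_
  · simp only [A, Set.mem_compl_iff, Set.mem_ofPred_eq] at hx hy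
    omega
  · by_contra hempty
    refine hG ⟨Coloring.mk c fun {x y} hxy hc => hempty ?_⟩
    by_cases hx : x ∈ A
    · exact ⟨s(x, y), Or.inl ⟨hxy, x, hx, y, hc.symm.trans hx, rfl⟩⟩
    · exact ⟨s(x, y), Or.inr ⟨hxy, x, hx, y, fun hy => hx (hc.trans hy), rfl⟩⟩

namespace IsNearBipartition

variable {G : SimpleGraph V} {A : Set V} {e f : Sym2 V}

lemma symm (hA : IsNearBipartition G A e f) : IsNearBipartition G Aᶜ f e :=
  ⟨hA.2, by rw [compl_compl]; exact hA.1⟩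

variable (hA : IsNearBipartition G A e f)
include hA

lemma exists_eq_mk : ∃ a₁ a₂, G.Adj a₁ a₂ ∧ e = s(a₁, a₂) := by
  obtain ⟨h, a₁, -, a₂, -, rfl⟩ : e ∈ betweenEdges G A A := hA.1 ▸ Set.mem_singleton e
  exact ⟨a₁, a₂, h, rfl⟩

lemma mem_edgeSet : e ∈ G.edgeSet := by
  obtain ⟨a₁, a₂, h, rfl⟩ := hA.exists_eq_mk
  exact h

lemma eq_of_adj {x y : V} (hx : x ∈ A) (hy : y ∈ A) (hxy : G.Adj x y) : s(x, y) = e := by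
  have h : s(x, y) ∈ betweenEdges G A A := ⟨hxy, x, hx, y, hy, rfl⟩
  rwa [hA.1] at h

lemma ne_of_mem {x y : V} (hx : x ∈ A) : s(x, y) ≠ f := by
  intro h
  have hf : s(x, y) ∈ betweenEdges G Aᶜ Aᶜ := h ▸ hA.2 ▸ Set.mem_singleton f
  exact mem_of_mk_mem_betweenEdges_self hf hx

lemma deleteEdges_adj_of_ne {x y : V} (hx : x ∈ A) (hxy : G.Adj x y) (he : s(x, y) ≠ e) :
    (G.deleteEdges {e, f}).Adj x y :=
  deleteEdges_adj.2 ⟨hxy, by simp [he, hA.ne_of_mem hx]⟩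

lemma isBipartiteWith : (G.deleteEdges {e, f}).IsBipartiteWith A Aᶜ where
  disjoint := disjoint_compl_right
  mem_of_adj v w h := by
    obtain ⟨hvw, hne⟩ := deleteEdges_adj.1 h
    by_cases hv : v ∈ A <;> by_cases hw : w ∈ A
    · exact (hne (Or.inl (hA.eq_of_adj hv hw hvw))).elim
    · exact Or.inl ⟨hv, hw⟩
    · exact Or.inr ⟨hv, hw⟩
    · exact (hne (Or.inr (hA.symm.eq_of_adj hv hw hvw))).elim

lemma iUnion_neighborSet_subset_compl {S : Set V} (hSA : S ⊆ A) :
    ⋃ x ∈ S, (G.deleteEdges {e, f}).neighborSet x ⊆ Aᶜ :=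
  Set.iUnion₂_subset fun _ hx _ hy => hA.isBipartiteWith.mem_of_mem_adj (hSA hx) hy

variable [Finite V] (hcubic : Cubic G)
include hcubic

lemma ncard_eq_ncard_compl : A.ncard = Aᶜ.ncard := by
  have h1 := mul_ncard_eq_betweenEdges_add_cutEdges hcubic A
  have h2 := mul_ncard_eq_betweenEdges_add_cutEdges hcubic Aᶜ
  rw [hA.1, Set.ncard_singleton] at h1
  rw [hA.2, Set.ncard_singleton, cutEdges_compl] at h2
  omega

lemma mutuallyDependent : MutuallyDependent G e f := by
  refine ⟨hA.mem_edgeSet, hA.symm.mem_edgeSet, fun M hM => ?_⟩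
  -- `|A| = 2 [e ∈ M] + |M ∩ ∂A|` and `|Aᶜ| = 2 [f ∈ M] + |M ∩ ∂A|`
  have h1 := mul_ncard_eq_betweenEdges_add_cutEdges (ncard_neighborSet_spanningCoe hM) A
  have h2 := mul_ncard_eq_betweenEdges_add_cutEdges (ncard_neighborSet_spanningCoe hM) Aᶜ
  rw [betweenEdges_spanningCoe, hA.1] at h1
  rw [betweenEdges_spanningCoe, hA.2, cutEdges_compl] at h2
  have := hA.ncard_eq_ncard_compl hcubic
  constructor <;> intro h <;> by_contra h' <;> simp [h, h'] at h1 h2 <;> omega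

lemma two_le_ncard_neighborSet (x : V) : 2 ≤ ((G.deleteEdges {e, f}).neighborSet x).ncard := by
  wlog hx : x ∈ A generalizing A e f
  · rw [Set.pair_comm]
    exact this hA.symm hx
  have hsub : G.neighborSet x ⊆ (G.deleteEdges {e, f}).neighborSet x ∪ {y | s(x, y) = e} := by
    intro y hy
    by_cases he : s(x, y) = e
    · exact Or.inr he
    · exact Or.inl (hA.deleteEdges_adj_of_ne hx hy he)
  have hsing : {y | s(x, y) = e}.ncard ≤ 1 :=
    (Set.ncard_le_one (Set.toFinite _)).2 fun y hy z hz => Sym2.congr_right.1 (hy.trans hz.symm)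
  have := (Set.ncard_le_ncard hsub).trans (Set.ncard_union_le _ _)
  rw [hcubic x] at this
  omega

/-- Every edge at `S` other than `e` lies inside `S ∪ T`; compare the degree sums over `S` and over
`S ∪ T`. -/
lemma ncard_cutEdges_union_add_le {S T : Set V} (hSA : S ⊆ A) (hTA : T ⊆ Aᶜ)
    (hST : ∀ x ∈ S, ∀ y, (G.deleteEdges {e, f}).Adj x y → y ∈ T) :
    (cutEdges G (S ∪ T)).ncard + 3 * S.ncard ≤ 3 * T.ncard + 2 := by
  have hinner : betweenEdges G S S ∪ (cutEdges G S \ {e}) ⊆ betweenEdges G (S ∪ T) (S ∪ T) := by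
    rintro _ (⟨h, p, hp, q, hq, rfl⟩ | ⟨⟨h, p, q, rfl, hp, -⟩, hne⟩)
    · exact ⟨h, p, Or.inl hp, q, Or.inl hq, rfl⟩
    · exact ⟨h, p, Or.inl hp, q, Or.inr (hST p hp q (hA.deleteEdges_adj_of_ne (hSA hp) h hne)), rfl⟩
  have hSe : betweenEdges G S S ∪ (cutEdges G S ∩ {e}) ⊆ {e} := by
    refine Set.union_subset ?_ Set.inter_subset_right
    rintro _ ⟨h, p, hp, q, hq, rfl⟩
    exact hA.eq_of_adj (hSA hp) (hSA hq) h
  have hdisj := disjoint_betweenEdges_cutEdges G S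
  have h1 := Set.ncard_le_ncard hinner
  have h2 := Set.ncard_le_ncard hSe
  rw [Set.ncard_union_eq (hdisj.mono_right Set.sdiff_subset)] at h1
  rw [Set.ncard_union_eq (hdisj.mono_right Set.inter_subset_left), Set.ncard_singleton] at h2
  have h3 := Set.ncard_inter_add_ncard_sdiff_eq_ncard (cutEdges G S) {e}
  have hS := mul_ncard_eq_betweenEdges_add_cutEdges hcubic S
  have hX := mul_ncard_eq_betweenEdges_add_cutEdges hcubic (S ∪ T)
  rw [Set.ncard_union_eq (Set.disjoint_left.2 fun x hxS hxT => hTA hxT (hSA hxS))] at hX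
  omega

variable (hG : IsBrick G)
include hG

lemma exists_isPerfectMatching_notMem :
    ∃ M : G.Subgraph, M.IsPerfectMatching ∧ e ∉ M.edgeSet ∧ f ∉ M.edgeSet := by
  obtain ⟨a₁, a₂, -, rfl⟩ := hA.exists_eq_mk
  obtain ⟨w, hw, hwa⟩ := Set.exists_ne_of_one_lt_ncard (by rw [hcubic a₁]; norm_num) a₂
  obtain ⟨M, hM, hwM⟩ := hG.1.2.2 s(a₁, w) hw
  have he : s(a₁, a₂) ∉ M.edgeSet := fun h => hwa (hM.1.eq_of_adj_left hwM h)
  exact ⟨M, hM, he, fun hf => he (((hA.mutuallyDependent hcubic).2.2 M hM).2 hf)⟩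

lemma reachable_of_adj {x y : V} (hxy : G.Adj x y) :
    (G.deleteEdges {e, f}).Reachable x y := by
  by_contra hxy'
  set X : Set V := {z | (G.deleteEdges {e, f}).Reachable x z}
  have hcut : cutEdges G X ⊆ {e, f} := by
    rintro _ ⟨hpq, p, q, rfl, hp, hq⟩
    by_contra hne
    exact hq (hp.trans (deleteEdges_adj.2 ⟨hpq, hne⟩).reachable)
  obtain ⟨M, hM, he, hf⟩ := hA.exists_isPerfectMatching_notMem hcubic hG
  have heven : Even X.ncard := by
    have hM0 : M.edgeSet ∩ cutEdges G X = ∅ := by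
      refine Set.eq_empty_of_forall_notMem fun ε ⟨hε, hcε⟩ => ?_
      rcases hcut hcε with rfl | rfl
      exacts [he hε, hf hε]
    rw [even_ncard_iff_even_ncard_inter_cutEdges hM, hM0, Set.ncard_empty]
    exact ⟨0, rfl⟩
  have h3 : 3 ≤ X.ncard := by
    have hsub : insert x ((G.deleteEdges {e, f}).neighborSet x) ⊆ X := by
      rintro z (rfl | hz)
      exacts [Reachable.refl _, Adj.reachable hz]
    have := Set.ncard_le_ncard hsub
    rw [Set.ncard_insert_of_notMem (s := (G.deleteEdges {e, f}).neighborSet x)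
      (fun h => (G.deleteEdges {e, f}).loopless.irrefl x h)] at this
    have := hA.two_le_ncard_neighborSet hcubic x
    omega
  have := hG.two_lt_ncard_cutEdges heven h3 ⟨y, hxy'⟩
  have := (Set.ncard_le_ncard hcut).trans (ncard_pair_le e f)
  omega

lemma connected : (G.deleteEdges {e, f}).Connected := by
  have := hG.1.1.nonempty
  refine ⟨fun u v => ?_⟩
  induction (reachable_iff_reflTransGen u v).1 (hG.1.1.preconnected u v) with
  | refl => rfl
  | tail _ hadj ih => exact ih.trans (hA.reachable_of_adj hcubic hG hadj)

/-- A violating `S` would make `S ∪ N(S)` an even shore with at most two cut edges. -/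
lemma hasPositiveSurplus : HasPositiveSurplus (G.deleteEdges {e, f}) A := by
  intro S hSA ⟨s, hs⟩ hSA'
  by_contra! hTS
  have hTA := hA.iUnion_neighborSet_subset_compl hSA
  have hcut := hA.ncard_cutEdges_union_add_le hcubic hSA hTA fun x hx y hy => Set.mem_biUnion hx hy
  have hT2 : 2 ≤ (⋃ x ∈ S, (G.deleteEdges {e, f}).neighborSet x).ncard :=
    (hA.two_le_ncard_neighborSet hcubic s).trans (Set.ncard_le_ncard (Set.subset_biUnion_of_mem hs))
  generalize ⋃ x ∈ S, (G.deleteEdges {e, f}).neighborSet x = T at *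
  have hX := Set.ncard_union_eq (Set.disjoint_left.2 fun x hxS hxT => hTA hxT (hSA hxS))
  obtain ⟨z, hzA, hzS⟩ := Set.exists_of_ssubset (hSA.ssubset_of_ne hSA')
  have := hG.two_lt_ncard_cutEdges ⟨S.ncard, by omega⟩ (by omega)
    ⟨z, fun h : z ∈ S ∪ T => h.elim hzS fun hzT => hTA hzT hzA⟩
  omega

lemma exists_isPerfectMatching_mem_edgeSet_deleteEdges {x y : V}
    (hxy : (G.deleteEdges {e, f}).Adj x y) :
    ∃ M : (G.deleteEdges {e, f}).Subgraph, M.IsPerfectMatching ∧ s(x, y) ∈ M.edgeSet := by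
  have hP := hA.hasPositiveSurplus hcubic hG
  have hPc := hA.symm.hasPositiveSurplus hcubic hG
  rw [Set.pair_comm] at hPc
  rcases hA.isBipartiteWith.mem_of_adj hxy with ⟨hx, -⟩ | ⟨-, hy⟩
  · exact exists_isPerfectMatching_mem_edgeSet hA.isBipartiteWith hP hPc hx hxy
  · obtain ⟨M, hM, h⟩ := exists_isPerfectMatching_mem_edgeSet hA.isBipartiteWith hP hPc hy hxy.symm
    exact ⟨M, hM, Sym2.eq_swap ▸ h⟩

lemma matchingCovered_deleteEdges : MatchingCovered (G.deleteEdges {e, f}) := by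
  refine ⟨hA.connected hcubic hG, ?_, fun ε hε => ?_⟩
  · obtain ⟨x⟩ := hG.1.1.nonempty
    have hx := hA.two_le_ncard_neighborSet hcubic x
    obtain ⟨y, hy⟩ := Set.nonempty_of_ncard_ne_zero
      (by omega : ((G.deleteEdges {e, f}).neighborSet x).ncard ≠ 0)
    exact ⟨s(x, y), hy⟩
  · induction ε using Sym2.ind with
    | _ x y => exact hA.exists_isPerfectMatching_mem_edgeSet_deleteEdges hcubic hG hε

end IsNearBipartition

/-- Let `G` be a cubic brick. If there are two edges `e, f` such that
`G − {e, f}` is bipartite, then `G − {e, f}` is matching covered; consequently `G` is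
near-bipartite. -/
theorem stmt5 {V : Type*} [Fintype V] (G : SimpleGraph V)
    (hG : IsBrick G) (hcubic : Cubic G)
    (e f : Sym2 V) (he : e ∈ G.edgeSet) (hf : f ∈ G.edgeSet) (hef : e ≠ f)
    (hbip : (G.deleteEdges {e, f}).Colorable 2) :
    MatchingCovered (G.deleteEdges {e, f}) ∧ NearBipartite G := by
  obtain ⟨A, hA⟩ := exists_isNearBipartition hcubic hG.2.1 hbip
  have hmc := hA.matchingCovered_deleteEdges hcubic hG
  exact ⟨hmc, hG.1, hG.2.1, e, f, he, hf, hef, hbip, hmc⟩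

end Paper
end

section
/- For every integer k ≥ 2, the Möbius ladder of order 4k (i.e., the circulant graph on Z_{4k} with connection set {1, −1, 2k}) is an essentially 4-edge-connected cubic near-bipartite brick. -/
namespace Paper

open SimpleGraph

variable {V : Type*}

/-!
The rungs `s(v, v + 2k)` form a perfect matching, and so do the even steps `s(2i, 2i + 1)` and
the odd steps `s(2i + 1, 2i + 2)`. Hence a tight cut `∂X` contains exactly two steps and one
rung; so does a `3`-cut, because every nontrivial cut contains an even, nonzero number of steps.
Two steps in the cut make `X` or its complement an arc of the `4k`-cycle of length at most `2k`.
Every vertex of such an arc sends its rung across the cut, and different vertices send different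
rungs, so the arc is a single vertex.

The cycle `0, 1, …, 2k` closed by a rung is odd. Deleting the steps at `0` and at `2k` leaves a
planar ladder, which is bipartite; each of its steps `s(v, v + 1)` lies in the perfect matching
obtained from the rungs by trading the rungs at `v` and `v + 1` for the steps at `v` and
`v + 2k`.
-/

lemma mem_cutEdges_mk {G : SimpleGraph V} {X : Set V} {x y : V} :
    s(x, y) ∈ cutEdges G X ↔ G.Adj x y ∧ ¬(x ∈ X ↔ y ∈ X) := by
  constructor
  · rintro ⟨hxy, a, b, hab, ha, hb⟩
    rcases Sym2.eq_iff.mp hab with ⟨rfl, rfl⟩ | ⟨rfl, rfl⟩ <;> exact ⟨hxy, by tauto⟩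
  · rintro ⟨hxy, hX⟩
    by_cases hx : x ∈ X
    · exact ⟨hxy, x, y, rfl, hx, by tauto⟩
    · exact ⟨hxy, y, x, Sym2.eq_swap, by tauto, hx⟩

lemma cutEdges_inter_range {G : SimpleGraph V} (X : Set V) {f : V → V}
    (hadj : ∀ v, G.Adj v (f v)) :
    cutEdges G X ∩ Set.range (fun v => s(v, f v)) =
      (fun v => s(v, f v)) '' {v | ¬(v ∈ X ↔ f v ∈ X)} := by
  ext e
  constructor
  · rintro ⟨he, v, rfl⟩
    exact ⟨v, (mem_cutEdges_mk.mp he).2, rfl⟩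
  · rintro ⟨v, hv, rfl⟩
    exact ⟨mem_cutEdges_mk.mpr ⟨hadj v, hv⟩, v, rfl⟩

def involutionMatching (G : SimpleGraph V) (f : V → V) (hadj : ∀ v, G.Adj v (f v)) :
    G.Subgraph where
  verts := Set.univ
  Adj u v := f u = v ∨ f v = u
  adj_sub := by
    rintro u v (rfl | rfl)
    exacts [hadj u, (hadj v).symm]
  edge_vert _ := Set.mem_univ _
  symm := ⟨fun _ _ => Or.symm⟩

section involutionMatching

variable {G : SimpleGraph V} {f : V → V} {hadj : ∀ v, G.Adj v (f v)}

lemma involutionMatching_isPerfectMatching (hf : Function.Involutive f) :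
    (involutionMatching G f hadj).IsPerfectMatching := by
  refine Subgraph.isPerfectMatching_iff.mpr fun v => ⟨f v, Or.inl rfl, ?_⟩
  rintro w (rfl | rfl)
  exacts [rfl, (hf w).symm]

lemma involutionMatching_edgeSet :
    (involutionMatching G f hadj).edgeSet = Set.range (fun v => s(v, f v)) := by
  ext e
  induction e with
  | h u w =>
    change f u = w ∨ f w = u ↔ _
    constructor
    · rintro (rfl | rfl)
      exacts [⟨u, rfl⟩, ⟨w, Sym2.eq_swap⟩]
    · rintro ⟨v, hv⟩
      rcases Sym2.eq_iff.mp hv with ⟨rfl, rfl⟩ | ⟨rfl, rfl⟩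
      exacts [Or.inl rfl, Or.inr rfl]

lemma involutionMatching_inter_cutEdges (X : Set V) :
    (involutionMatching G f hadj).edgeSet ∩ cutEdges G X =
      (fun v => s(v, f v)) '' {v | ¬(v ∈ X ↔ f v ∈ X)} := by
  rw [involutionMatching_edgeSet, Set.inter_comm, cutEdges_inter_range X hadj]

end involutionMatching

lemma even_ncard_setOf_not_mem_iff_perm_mem [Finite V] (σ : Equiv.Perm V) (X : Set V) :
    Even {v | ¬(v ∈ X ↔ σ v ∈ X)}.ncard := by
  have hsplit : {v | ¬(v ∈ X ↔ σ v ∈ X)} =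
      {v | v ∈ X ∧ σ v ∉ X} ∪ {v | v ∉ X ∧ σ v ∈ X} := by
    ext v; simp only [Set.mem_ofPred_eq, Set.mem_union]; tauto
  have hdisj : Disjoint {v | v ∈ X ∧ σ v ∉ X} {v | v ∉ X ∧ σ v ∈ X} :=
    Set.disjoint_left.mpr fun v hv hv' => hv'.1 hv.1
  -- both `X` and `σ ⁻¹' X` split along `X ∩ σ ⁻¹' X`, so exits and entries are equinumerous
  have hX := Set.ncard_inter_add_ncard_sdiff_eq_ncard X (σ ⁻¹' X)
  have hσX := Set.ncard_inter_add_ncard_sdiff_eq_ncard (σ ⁻¹' X) X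
  rw [Set.ncard_preimage_of_injective_subset_range σ.injective (by simp), Set.inter_comm] at hσX
  have hexits : {v | v ∈ X ∧ σ v ∉ X} = X \ σ ⁻¹' X := rfl
  have hentries : {v | v ∉ X ∧ σ v ∈ X} = σ ⁻¹' X \ X := by
    ext v; simp only [Set.mem_ofPred_eq, Set.mem_sdiff, Set.mem_preimage]; tauto
  rw [hsplit, Set.ncard_union_eq hdisj, hexits, hentries]
  exact ⟨(X \ σ ⁻¹' X).ncard, by omega⟩

def shiftBoundary {G : Type*} [Add G] (c : G) (X : Set G) : Set G :=
  {v | ¬(v ∈ X ↔ v + c ∈ X)}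

lemma even_ncard_shiftBoundary {G : Type*} [AddGroup G] [Finite G] (c : G) (X : Set G) :
    Even (shiftBoundary c X).ncard :=
  even_ncard_setOf_not_mem_iff_perm_mem (Equiv.addRight c) X

section AddMonoidWithOne

variable {G : Type*} [AddMonoidWithOne G] {m₁ m₂ : ℕ}

lemma add_natCast_mem_iff_of_forall_notMem_shiftBoundary {c : G} {X : Set G} (hm : m₁ ≤ m₂)
    (h : ∀ i, m₁ ≤ i → i < m₂ → c + i ∉ shiftBoundary 1 X) : c + m₂ ∈ X ↔ c + m₁ ∈ X := by
  induction m₂, hm using Nat.le_induction with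
  | base => rfl
  | succ m hm ih =>
    have hm' := h m hm (Nat.lt_succ_self m)
    simp only [shiftBoundary, Set.mem_ofPred_eq, not_not] at hm'
    rw [Nat.cast_succ, ← add_assoc, ← hm', ih fun i hi hi' => h i hi (hi'.trans m.lt_succ_self)]

lemma reachable_natCast_of_forall_adj {H : SimpleGraph G} (hm : m₁ ≤ m₂)
    (h : ∀ i, m₁ ≤ i → i < m₂ → H.Adj (i : G) (i + 1)) : H.Reachable m₁ m₂ := by
  induction m₂, hm using Nat.le_induction with
  | base => rfl
  | succ m hm ih =>
    rw [Nat.cast_succ]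
    exact (ih fun i hi hi' => h i hi (by omega)).trans (h m hm (by omega)).reachable

end AddMonoidWithOne

section ZMod

variable {n : ℕ} [NeZero n] {X : Set (ZMod n)}

lemma shiftBoundary_one_nonempty (hX : X.Nonempty) (hXc : Xᶜ.Nonempty) :
    (shiftBoundary 1 X).Nonempty := by
  obtain ⟨x, hx⟩ := hX
  obtain ⟨y, hy⟩ := hXc
  by_contra h
  have hxy := add_natCast_mem_iff_of_forall_notMem_shiftBoundary (c := x) (X := X)
    (Nat.zero_le (y - x).val) fun i _ _ hi => h ⟨_, hi⟩
  rw [ZMod.natCast_zmod_val, add_sub_cancel, Nat.cast_zero, add_zero] at hxy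
  exact hy (hxy.mpr hx)

lemma two_le_ncard_shiftBoundary_one (hX : X.Nonempty) (hXc : Xᶜ.Nonempty) :
    2 ≤ (shiftBoundary 1 X).ncard := by
  obtain ⟨m, hm⟩ := even_ncard_shiftBoundary 1 X
  have := (Set.ncard_pos).mpr (shiftBoundary_one_nonempty hX hXc)
  omega

/-- A set with exactly two boundary points `a`, `b` on the cycle `ZMod n` is, up to complement,
the arc of length `(b - a).val` starting at `a + 1`. -/
lemma mem_iff_iff_val_lt_of_shiftBoundary_eq_pair {a b : ZMod n} (hab : a ≠ b)
    (hS : shiftBoundary 1 X = {a, b}) (v : ZMod n) :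
    (v ∈ X ↔ a + 1 ∈ X) ↔ (v - (a + 1)).val < (b - a).val := by
  set d := (b - a).val with hd
  have hdn : d < n := ZMod.val_lt _
  have hd0 : d ≠ 0 := by rw [hd, Ne, ZMod.val_eq_zero, sub_eq_zero]; exact hab.symm
  have hb : a + (d : ZMod n) = b := by rw [hd, ZMod.natCast_zmod_val, add_sub_cancel]
  have hoff : ∀ i, 0 < i → i < n → i ≠ d → a + i ∉ shiftBoundary 1 X := by
    intro i hi hin hid hmem
    rw [hS, ← hb] at hmem
    rcases hmem with h | h
    · have := congrArg ZMod.val (add_eq_left.mp h)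
      rw [ZMod.val_cast_of_lt hin, ZMod.val_zero] at this
      omega
    · have := congrArg ZMod.val (add_left_cancel h)
      rw [ZMod.val_cast_of_lt hin, ZMod.val_cast_of_lt hdn] at this
      exact hid this
  have hinside : ∀ j, 1 ≤ j → j ≤ d → (a + j ∈ X ↔ a + 1 ∈ X) := by
    intro j hj hjd
    simpa using add_natCast_mem_iff_of_forall_notMem_shiftBoundary hj
      fun i hi hij => hoff i (by omega) (by omega) (by omega)
  have houtside : ∀ j, d < j → j ≤ n → (a + j ∈ X ↔ a + 1 ∉ X) := by
    intro j hdj hjn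
    have hbd : a + d ∈ shiftBoundary 1 X := by rw [hS, hb]; exact Or.inr rfl
    rw [add_natCast_mem_iff_of_forall_notMem_shiftBoundary hdj
      fun i hi hij => hoff i (by omega) (by omega) (by omega)]
    rw [← hinside d (by omega) le_rfl]
    simp only [shiftBoundary, Set.mem_ofPred_eq, Nat.cast_succ, ← add_assoc] at hbd ⊢
    tauto
  set j := (v - (a + 1)).val with hj
  have hjn : j < n := ZMod.val_lt _
  have hv : v = a + ((j + 1 : ℕ) : ZMod n) := by
    rw [Nat.cast_succ, hj, ZMod.natCast_zmod_val]; ring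
  rw [hv]
  by_cases hjd : j < d
  · exact iff_of_true (hinside (j + 1) (by omega) (by omega)) hjd
  · have := houtside (j + 1) (by omega) (by omega)
    exact iff_of_false (by tauto) hjd

end ZMod

/-- The shift by half of the cycle `ZMod (4 * k)`; the rungs of the ladder join `v` and
`v + antipode k`. -/
def antipode (k : ℕ) : ZMod (4 * k) := (2 * k : ℕ)

def mobiusLadder (k : ℕ) : SimpleGraph (ZMod (4 * k)) :=
  circulantGraph {1, -1, antipode k}

def ladder (k : ℕ) : SimpleGraph (ZMod (4 * k)) :=
  (mobiusLadder k).deleteEdges {s(0, 1), s(antipode k, antipode k + 1)}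

def parity (k : ℕ) : ZMod (4 * k) →+* ZMod 2 :=
  ZMod.castHom ⟨2 * k, by ring⟩ (ZMod 2)

/-- The partner map of the perfect matching formed by the steps `s(v, v + 1)` with
`parity k v = r`. -/
def stepPartner (k : ℕ) (r : ZMod 2) (v : ZMod (4 * k)) : ZMod (4 * k) :=
  if parity k v = r then v + 1 else v - 1

section

variable {k : ℕ}

lemma antipode_add_antipode : antipode k + antipode k = 0 := by
  rw [antipode, ← Nat.cast_add, ← two_mul, ← mul_assoc, ZMod.natCast_self]

lemma neg_antipode : -antipode k = antipode k :=
  neg_eq_of_add_eq_zero_left antipode_add_antipode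

lemma add_antipode_involutive : Function.Involutive (· + antipode k) := fun v => by
  simp only [add_assoc, antipode_add_antipode, add_zero]

lemma parity_antipode : parity k (antipode k) = 0 := by
  rw [antipode, map_natCast, Nat.cast_mul]
  exact zero_mul _

lemma stepPartner_involutive (r : ZMod 2) : Function.Involutive (stepPartner k r) := by
  have hsucc : ∀ x : ZMod 2, x + 1 = r ↔ x ≠ r := by decide +revert
  have hpred : ∀ x : ZMod 2, x - 1 = x + 1 := by decide
  intro v
  by_cases hv : parity k v = r
  · simp [stepPartner, hv, hsucc]
  · simp [stepPartner, hv, hsucc, hpred]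

end

section MobiusLadder

variable {k : ℕ} [NeZero k]

instance : Fact (1 < 4 * k) := ⟨by have := NeZero.pos k; omega⟩

lemma val_antipode : (antipode k).val = 2 * k :=
  ZMod.val_cast_of_lt (by have := NeZero.pos k; omega)

lemma antipode_ne_zero : antipode k ≠ 0 := by
  intro h
  have := congrArg ZMod.val h
  rw [val_antipode, ZMod.val_zero] at this
  have := NeZero.pos k
  omega

lemma antipode_ne_one : antipode k ≠ 1 := by
  intro h
  have := congrArg ZMod.val h
  rw [val_antipode, ZMod.val_one] at this
  omega

lemma antipode_add_one_ne_zero : antipode k + 1 ≠ 0 := by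
  intro h
  have := congrArg ZMod.val h
  rw [ZMod.val_add_of_lt, val_antipode, ZMod.val_one, ZMod.val_zero] at this
  · omega
  · rw [val_antipode, ZMod.val_one]; have := NeZero.pos k; omega

lemma two_ne_zero_zmod : (2 : ZMod (4 * k)) ≠ 0 := by
  intro h
  have hk := NeZero.pos k
  have := congrArg ZMod.val h
  rw [ZMod.val_two_eq_two_mod, Nat.mod_eq_of_lt (by omega), ZMod.val_zero] at this
  omega

lemma val_add_antipode_of_lt {x : ZMod (4 * k)} (hx : x.val < 2 * k) :
    (x + antipode k).val = x.val + 2 * k := by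
  rw [ZMod.val_add_of_lt (by rw [val_antipode]; omega), val_antipode]

lemma val_add_antipode_of_le {x : ZMod (4 * k)} (hx : 2 * k ≤ x.val) :
    (x + antipode k).val = x.val - 2 * k := by
  rw [← sub_neg_eq_add, neg_antipode, ZMod.val_sub, val_antipode]
  rwa [val_antipode]

lemma mobiusLadder_adj {u v : ZMod (4 * k)} :
    (mobiusLadder k).Adj u v ↔ v = u + 1 ∨ u = v + 1 ∨ v = u + antipode k := by
  have h1 : (1 : ZMod (4 * k)) ≠ 0 := one_ne_zero
  have hA := antipode_ne_zero (k := k)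
  have hAA := antipode_add_antipode (k := k)
  simp only [mobiusLadder, circulantGraph_adj, Set.mem_insert_iff, Set.mem_singleton_iff]
  grind

lemma mobiusLadder_cubic : Cubic (mobiusLadder k) := by
  intro v
  have h2 := two_ne_zero_zmod (k := k)
  have hA1 := antipode_ne_one (k := k)
  have hA1' := antipode_add_one_ne_zero (k := k)
  have hnbr : (mobiusLadder k).neighborSet v = {v + 1, v - 1, v + antipode k} := by
    ext w
    simp only [mem_neighborSet, mobiusLadder_adj, Set.mem_insert_iff, Set.mem_singleton_iff]
    grind
  rw [hnbr, Set.ncard_eq_three]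
  exact ⟨_, _, _, fun h => h2 (by linear_combination h), fun h => hA1 (by linear_combination -h),
    fun h => hA1' (by linear_combination -h), rfl⟩

lemma mobiusLadder_adj_add_one (v : ZMod (4 * k)) : (mobiusLadder k).Adj v (v + 1) :=
  mobiusLadder_adj.mpr (Or.inl rfl)

lemma mobiusLadder_adj_add_antipode (v : ZMod (4 * k)) :
    (mobiusLadder k).Adj v (v + antipode k) :=
  mobiusLadder_adj.mpr (Or.inr (Or.inr rfl))

lemma mobiusLadder_edgeSet : (mobiusLadder k).edgeSet =
    Set.range (fun v => s(v, v + 1)) ∪ Set.range (fun v => s(v, v + antipode k)) := by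
  ext e
  induction e with
  | h u w =>
    rw [mem_edgeSet, mobiusLadder_adj]
    constructor
    · rintro (rfl | rfl | rfl)
      exacts [Or.inl ⟨u, rfl⟩, Or.inl ⟨w, Sym2.eq_swap⟩, Or.inr ⟨u, rfl⟩]
    · rintro (⟨v, hv⟩ | ⟨v, hv⟩) <;> rcases Sym2.eq_iff.mp hv with ⟨rfl, rfl⟩ | ⟨rfl, rfl⟩
      · exact Or.inl rfl
      · exact Or.inr (Or.inl rfl)
      · exact Or.inr (Or.inr rfl)
      · exact Or.inr (Or.inr (add_antipode_involutive v).symm)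

lemma step_injective : Function.Injective (fun v : ZMod (4 * k) => s(v, v + 1)) := by
  intro u w h
  have h2 := two_ne_zero_zmod (k := k)
  rcases Sym2.eq_iff.mp h with ⟨h, -⟩ | ⟨h, h'⟩
  · exact h
  · grind

lemma step_ne_rung (u w : ZMod (4 * k)) : s(u, u + 1) ≠ s(w, w + antipode k) := by
  have hA1 := antipode_ne_one (k := k)
  have hA1' := antipode_add_one_ne_zero (k := k)
  intro h
  rcases Sym2.eq_iff.mp h with ⟨h, h'⟩ | ⟨h, h'⟩ <;> grind

lemma cutEdges_mobiusLadder (X : Set (ZMod (4 * k))) :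
    cutEdges (mobiusLadder k) X =
      (fun v => s(v, v + 1)) '' shiftBoundary 1 X ∪
        (fun v => s(v, v + antipode k)) '' shiftBoundary (antipode k) X := by
  simp only [shiftBoundary]
  rw [← cutEdges_inter_range X mobiusLadder_adj_add_one,
    ← cutEdges_inter_range X mobiusLadder_adj_add_antipode, ← Set.inter_union_distrib_left,
    ← mobiusLadder_edgeSet, eq_comm, Set.inter_eq_left]
  exact fun e he => he.1

lemma ncard_cutEdges_mobiusLadder (X : Set (ZMod (4 * k))) :
    (cutEdges (mobiusLadder k) X).ncard = (shiftBoundary 1 X).ncard +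
      ((fun v => s(v, v + antipode k)) '' shiftBoundary (antipode k) X).ncard := by
  rw [cutEdges_mobiusLadder, Set.ncard_union_eq, Set.ncard_image_of_injective _ step_injective]
  rw [Set.disjoint_left]
  rintro e ⟨u, -, rfl⟩ ⟨w, -, h⟩
  exact step_ne_rung u w h.symm

lemma isTrivialShore_of_ncard_shiftBoundary {X : Set (ZMod (4 * k))}
    (h1 : (shiftBoundary 1 X).ncard = 2)
    (h2 : ((fun v => s(v, v + antipode k)) '' shiftBoundary (antipode k) X).ncard ≤ 1) :
    IsTrivialShore X := by
  obtain ⟨a, b, hab, hS⟩ := Set.ncard_eq_two.mp h1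
  wlog hd : (b - a).val ≤ 2 * k generalizing a b
  · refine this b a hab.symm (by rw [hS, Set.pair_comm]) ?_
    have := ZMod.val_lt (b - a)
    rw [← neg_sub, ZMod.neg_val, if_neg (sub_ne_zero.mpr hab.symm)]
    omega
  set c := a + 1
  set Y := {v | v ∈ X ↔ c ∈ X}
  -- `Y` is an arc of length at most `2 * k`, so it contains no antipodal pair
  have hY : ∀ v ∈ Y, v + antipode k ∉ Y := by
    intro v hv hvA
    have h := (mem_iff_iff_val_lt_of_shiftBoundary_eq_pair hab hS v).mp hv
    have h' := (mem_iff_iff_val_lt_of_shiftBoundary_eq_pair hab hS _).mp hvA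
    rw [add_sub_right_comm, val_add_antipode_of_lt (by omega)] at h'
    omega
  have hYS : Y ⊆ shiftBoundary (antipode k) X := by
    intro v hv
    have := hY v hv
    simp only [Y, shiftBoundary, Set.mem_ofPred_eq] at hv this ⊢
    tauto
  have hinj : Set.InjOn (fun v => s(v, v + antipode k)) Y := by
    intro u hu w hw h
    rcases Sym2.eq_iff.mp h with ⟨h, -⟩ | ⟨h, -⟩
    · exact h
    · exact absurd (h ▸ hu) (hY w hw)
  have hYc : Y = {c} := by
    refine Set.eq_singleton_iff_unique_mem.mpr ⟨Iff.rfl, fun v hv => ?_⟩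
    refine (Set.ncard_le_one).mp ?_ v hv c Iff.rfl
    rw [← hinj.ncard_image]
    exact (Set.ncard_le_ncard (Set.image_mono hYS)).trans h2
  by_cases hc : c ∈ X
  · exact Or.inl ⟨c, by rw [← hYc]; ext v; simp [Y, hc]⟩
  · exact Or.inr ⟨c, by rw [← hYc]; ext v; simp [Y, hc]⟩

lemma mobiusLadder_essFourEdgeConnected : EssFourEdgeConnected (mobiusLadder k) := by
  refine ⟨fun X hX hXc => ?_, fun X h3 => ?_⟩
  · rw [ncard_cutEdges_mobiusLadder]
    exact (two_le_ncard_shiftBoundary_one hX hXc).trans (Nat.le_add_right _ _)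
  · obtain ⟨-, -, x, y, -, hx, hy⟩ :=
      Set.nonempty_of_ncard_ne_zero (s := cutEdges (mobiusLadder k) X) (by omega)
    have h2 := two_le_ncard_shiftBoundary_one ⟨x, hx⟩ ⟨y, hy⟩
    obtain ⟨m, hm⟩ := even_ncard_shiftBoundary 1 X
    rw [ncard_cutEdges_mobiusLadder] at h3
    exact isTrivialShore_of_ncard_shiftBoundary (by omega) (by omega)

lemma mobiusLadder_adj_stepPartner (r : ZMod 2) (v : ZMod (4 * k)) :
    (mobiusLadder k).Adj v (stepPartner k r v) := by
  unfold stepPartner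
  split_ifs
  · exact mobiusLadder_adj_add_one v
  · exact mobiusLadder_adj.mpr (Or.inr (Or.inl (sub_add_cancel v 1).symm))

variable (k) in
def stepMatching (r : ZMod 2) : (mobiusLadder k).Subgraph :=
  involutionMatching _ (stepPartner k r) (mobiusLadder_adj_stepPartner r)

variable (k) in
def rungMatching : (mobiusLadder k).Subgraph :=
  involutionMatching _ (· + antipode k) mobiusLadder_adj_add_antipode

lemma stepMatching_edgeSet (r : ZMod 2) :
    (stepMatching k r).edgeSet = (fun v => s(v, v + 1)) '' {v | parity k v = r} := by
  have hpred : ∀ x : ZMod 2, x ≠ r → x - 1 = r := by decide +revert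
  rw [stepMatching, involutionMatching_edgeSet]
  ext e
  constructor
  · rintro ⟨v, rfl⟩
    by_cases hv : parity k v = r
    · exact ⟨v, hv, by simp [stepPartner, hv]⟩
    · refine ⟨v - 1, ?_, ?_⟩
      · rw [Set.mem_ofPred_eq, map_sub, map_one, hpred _ hv]
      · simp [stepPartner, hv, Sym2.eq_swap]
  · rintro ⟨v, hv, rfl⟩
    exact ⟨v, by simp [stepPartner, hv.out]⟩

lemma stepMatching_inter_cutEdges (r : ZMod 2) (X : Set (ZMod (4 * k))) :
    (stepMatching k r).edgeSet ∩ cutEdges (mobiusLadder k) X =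
      (fun v => s(v, v + 1)) '' ({v | parity k v = r} ∩ shiftBoundary 1 X) := by
  have hE : (stepMatching k r).edgeSet ⊆ Set.range fun v => s(v, v + 1) := by
    rw [stepMatching_edgeSet]; exact Set.image_subset_range _ _
  rw [Set.image_inter step_injective, ← stepMatching_edgeSet, shiftBoundary,
    ← cutEdges_inter_range X mobiusLadder_adj_add_one, ← Set.inter_assoc, eq_comm,
    Set.inter_eq_left]
  exact Set.inter_subset_left.trans hE

lemma rungMatching_inter_cutEdges (X : Set (ZMod (4 * k))) :
    (rungMatching k).edgeSet ∩ cutEdges (mobiusLadder k) X =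
      (fun v => s(v, v + antipode k)) '' shiftBoundary (antipode k) X :=
  involutionMatching_inter_cutEdges X

lemma ncard_shiftBoundary_of_isTightCut {X : Set (ZMod (4 * k))}
    (hX : IsTightCut (mobiusLadder k) X) :
    (shiftBoundary 1 X).ncard = 2 ∧
      ((fun v => s(v, v + antipode k)) '' shiftBoundary (antipode k) X).ncard = 1 := by
  have hstep (r : ZMod 2) : ({v | parity k v = r} ∩ shiftBoundary 1 X).ncard = 1 := by
    have := hX (stepMatching k r)
      (involutionMatching_isPerfectMatching (stepPartner_involutive r))
    rwa [stepMatching_inter_cutEdges, Set.ncard_image_of_injective _ step_injective] at this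
  have hsplit : shiftBoundary 1 X =
      ({v | parity k v = 0} ∩ shiftBoundary 1 X) ∪
        ({v | parity k v = 1} ∩ shiftBoundary 1 X) := by
    rw [← Set.union_inter_distrib_right, Set.inter_eq_right.mpr]
    intro v _
    have : ∀ x : ZMod 2, x = 0 ∨ x = 1 := by decide
    exact this (parity k v)
  have hdisj : Disjoint ({v | parity k v = 0} ∩ shiftBoundary 1 X)
      ({v | parity k v = 1} ∩ shiftBoundary 1 X) :=
    Set.disjoint_left.mpr fun v h0 h1 => zero_ne_one (h0.1.symm.trans h1.1)
  refine ⟨by rw [hsplit, Set.ncard_union_eq hdisj, hstep, hstep], ?_⟩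
  have := hX (rungMatching k) (involutionMatching_isPerfectMatching add_antipode_involutive)
  rwa [rungMatching_inter_cutEdges] at this

lemma mobiusLadder_not_colorable_two : ¬(mobiusLadder k).Colorable 2 := by
  rintro ⟨c⟩
  have hfin : ∀ a b d : Fin 2, a ≠ b → b ≠ d → d = a := by decide
  have htwo : ∀ v, c (v + 2) = c v := fun v => hfin _ _ _
    (c.valid (mobiusLadder_adj_add_one v))
    (by rw [show v + 2 = v + 1 + 1 by ring]; exact c.valid (mobiusLadder_adj_add_one _))
  have heven : ∀ i : ℕ, c ((2 * i : ℕ) : ZMod (4 * k)) = c 0 := by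
    intro i
    induction i with
    | zero => simp
    | succ i ih => rw [Nat.mul_succ, Nat.cast_add, Nat.cast_two, htwo, ih]
  exact c.valid (mobiusLadder_adj_add_antipode 0) (by rw [zero_add, antipode, heven])

lemma ladder_adj_add_one {v : ZMod (4 * k)} (h0 : v ≠ 0) (hA : v ≠ antipode k) :
    (ladder k).Adj v (v + 1) := by
  refine deleteEdges_adj.mpr ⟨mobiusLadder_adj_add_one v, ?_⟩
  rintro (h | h)
  · exact h0 (step_injective (h.trans (by simp)))
  · exact hA (step_injective h)

lemma ladder_adj_add_antipode (v : ZMod (4 * k)) : (ladder k).Adj v (v + antipode k) := by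
  refine deleteEdges_adj.mpr ⟨mobiusLadder_adj_add_antipode v, ?_⟩
  rintro (h | h)
  · exact step_ne_rung 0 v (by rw [zero_add, h])
  · exact step_ne_rung _ v h.symm

lemma ladder_adj_natCast {i : ℕ} (hi0 : 0 < i) (hi : i < 4 * k) (hiA : i ≠ 2 * k) :
    (ladder k).Adj (i : ZMod (4 * k)) (i + 1) := by
  refine ladder_adj_add_one (fun h => ?_) (fun h => hiA ?_)
  · have := congrArg ZMod.val h
    rw [ZMod.val_cast_of_lt hi, ZMod.val_zero] at this
    omega
  · have := congrArg ZMod.val h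
    rwa [ZMod.val_cast_of_lt hi, val_antipode] at this

lemma ladder_connected : (ladder k).Connected := by
  have hreach : ∀ v : ZMod (4 * k), (ladder k).Reachable ((1 : ℕ) : ZMod (4 * k)) v := by
    intro v
    set m := (v - 1).val + 1 with hm
    have hmv : (m : ZMod (4 * k)) = v := by rw [hm, Nat.cast_succ, ZMod.natCast_zmod_val]; ring
    have hmn : m ≤ 4 * k := ZMod.val_lt (v - 1)
    rw [← hmv]
    by_cases hmk : m ≤ 2 * k
    · exact reachable_natCast_of_forall_adj (by omega) fun i hi hi' =>
        ladder_adj_natCast (by omega) (by omega) (by omega)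
    · have hrung : (ladder k).Adj ((1 : ℕ) : ZMod (4 * k)) ((2 * k + 1 : ℕ) : ZMod (4 * k)) :=
        by
        simpa [antipode, add_comm] using ladder_adj_add_antipode ((1 : ℕ) : ZMod (4 * k))
      exact hrung.reachable.trans (reachable_natCast_of_forall_adj (by omega) fun i hi hi' =>
        ladder_adj_natCast (by omega) (by omega) (by omega))
  exact ⟨fun u v => (hreach u).symm.trans (hreach v)⟩

lemma ladder_adj_cases {u w : ZMod (4 * k)} (h : (ladder k).Adj u w) :
    (w = u + 1 ∧ u ≠ 0 ∧ u ≠ antipode k) ∨ (u = w + 1 ∧ w ≠ 0 ∧ w ≠ antipode k) ∨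
      w = u + antipode k := by
  obtain ⟨hG, hnot⟩ := deleteEdges_adj.mp h
  rcases mobiusLadder_adj.mp hG with rfl | rfl | rfl
  · refine Or.inl ⟨rfl, ?_, ?_⟩ <;> rintro rfl <;> simp at hnot
  · refine Or.inr (Or.inl ⟨rfl, ?_, ?_⟩) <;> rintro rfl <;> simp [Sym2.eq_swap] at hnot
  · exact Or.inr (Or.inr rfl)

lemma ladder_colorable : (ladder k).Colorable 2 := by
  let color (v : ZMod (4 * k)) : ZMod 2 := parity k v + if (v - 1).val < 2 * k then 1 else 0
  have hstep : ∀ u, u ≠ 0 → u ≠ antipode k → color (u + 1) = color u + 1 := by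
    intro u h0 hA
    have h0' : u.val ≠ 0 := (ZMod.val_ne_zero u).mpr h0
    have hA' : u.val ≠ 2 * k := fun h => hA (ZMod.val_injective _ (h.trans val_antipode.symm))
    have hsub : (u - 1).val = u.val - 1 := by
      rw [ZMod.val_sub (by rw [ZMod.val_one]; omega), ZMod.val_one]
    have hhalf : (u.val < 2 * k) = (u.val - 1 < 2 * k) := propext (by omega)
    simp only [color, map_add, map_one, add_sub_cancel_right, hsub, hhalf]
    ring
  have hrung : ∀ u, color (u + antipode k) = color u + 1 := by
    intro u
    have h11 : (1 : ZMod 2) + 1 = 0 := rfl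
    simp only [color, map_add, parity_antipode, add_zero, add_sub_right_comm u]
    by_cases hu : (u - 1).val < 2 * k
    · simp [hu, val_add_antipode_of_lt hu, add_assoc, h11]
    · have : (u - 1).val - 2 * k < 2 * k := by have := ZMod.val_lt (u - 1); omega
      simp [hu, val_add_antipode_of_le (not_lt.mp hu), this]
  have hne : ∀ x : ZMod 2, x + 1 ≠ x := by decide
  refine ⟨Coloring.mk color fun {u w} h => ?_⟩
  rcases ladder_adj_cases h with ⟨rfl, h0, hA⟩ | ⟨rfl, h0, hA⟩ | rfl
  · rw [hstep u h0 hA]; exact (hne _).symm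
  · rw [hstep w h0 hA]; exact hne _
  · rw [hrung]; exact (hne _).symm

/-- Swapping the rungs at `v` and `v + 1` in the rung matching for the steps at `v` and
`v + antipode k` gives a perfect matching of the ladder through the step `s(v, v + 1)`. -/
lemma exists_isPerfectMatching_ladder_step {v : ZMod (4 * k)} (h0 : v ≠ 0)
    (hA : v ≠ antipode k) :
    ∃ M : (ladder k).Subgraph, M.IsPerfectMatching ∧ s(v, v + 1) ∈ M.edgeSet := by
  have h1 : (1 : ZMod (4 * k)) ≠ 0 := one_ne_zero
  have hA1 := antipode_ne_one (k := k)
  have hA1' := antipode_add_one_ne_zero (k := k)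
  have hAA := antipode_add_antipode (k := k)
  let f (u : ZMod (4 * k)) : ZMod (4 * k) :=
    if u = v ∨ u = v + antipode k then u + 1
    else if u = v + 1 ∨ u = v + antipode k + 1 then u - 1 else u + antipode k
  have hf : Function.Involutive f := by
    intro u
    simp only [f]
    grind
  have hadj : ∀ u, (ladder k).Adj u (f u) := by
    have hvA : (ladder k).Adj (v + antipode k) (v + antipode k + 1) :=
      ladder_adj_add_one (fun h => hA (by linear_combination h - hAA))
        (fun h => h0 (by linear_combination h))
    intro u
    simp only [f]
    split_ifs with hu hu'
    · rcases hu with rfl | rfl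
      exacts [ladder_adj_add_one h0 hA, hvA]
    · rcases hu' with rfl | rfl <;> rw [add_sub_cancel_right]
      exacts [(ladder_adj_add_one h0 hA).symm, hvA.symm]
    · exact ladder_adj_add_antipode u
  refine ⟨involutionMatching _ f hadj, involutionMatching_isPerfectMatching hf, ?_⟩
  rw [involutionMatching_edgeSet]
  exact ⟨v, by simp [f]⟩

lemma ladder_matchingCovered : MatchingCovered (ladder k) := by
  refine ⟨ladder_connected, ⟨s(0, 0 + antipode k), ladder_adj_add_antipode 0⟩, fun e he => ?_⟩
  induction e with
  | h u w =>
    rcases ladder_adj_cases ((mem_edgeSet _).mp he) with ⟨rfl, h0, hA⟩ | ⟨rfl, h0, hA⟩ | rfl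
    · exact exists_isPerfectMatching_ladder_step h0 hA
    · rw [Sym2.eq_swap]; exact exists_isPerfectMatching_ladder_step h0 hA
    · refine ⟨involutionMatching _ _ ladder_adj_add_antipode,
        involutionMatching_isPerfectMatching add_antipode_involutive, ?_⟩
      rw [involutionMatching_edgeSet]
      exact ⟨u, rfl⟩

lemma mobiusLadder_matchingCovered : MatchingCovered (mobiusLadder k) := by
  refine ⟨ladder_connected.mono (deleteEdges_le _),
    ⟨s(0, 0 + antipode k), mobiusLadder_adj_add_antipode 0⟩, fun e he => ?_⟩
  rw [mobiusLadder_edgeSet] at he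
  rcases he with ⟨v, rfl⟩ | ⟨v, rfl⟩
  · refine ⟨stepMatching k (parity k v),
      involutionMatching_isPerfectMatching (stepPartner_involutive _), ?_⟩
    rw [stepMatching_edgeSet]
    exact ⟨v, rfl, rfl⟩
  · refine ⟨rungMatching k, involutionMatching_isPerfectMatching add_antipode_involutive, ?_⟩
    rw [rungMatching, involutionMatching_edgeSet]
    exact ⟨v, rfl⟩

lemma mobiusLadder_isBrick : IsBrick (mobiusLadder k) :=
  ⟨mobiusLadder_matchingCovered, mobiusLadder_not_colorable_two, fun _ hX =>
    isTrivialShore_of_ncard_shiftBoundary (ncard_shiftBoundary_of_isTightCut hX).1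
      (ncard_shiftBoundary_of_isTightCut hX).2.le⟩

lemma mobiusLadder_nearBipartite : NearBipartite (mobiusLadder k) := by
  refine ⟨mobiusLadder_matchingCovered, mobiusLadder_not_colorable_two, s(0, 1),
    s(antipode k, antipode k + 1), ?_, mobiusLadder_adj_add_one _, fun h => ?_,
    ladder_colorable, ladder_matchingCovered⟩
  · simpa using mobiusLadder_adj_add_one (0 : ZMod (4 * k))
  · exact antipode_ne_zero (step_injective (h.symm.trans (by simp)))

end MobiusLadder

/-- For every integer `k ≥ 2`, the Möbius ladder of order `4k`, i.e.
the circulant graph on `ZMod (4k)` with connection set `{1, −1, 2k}`, is an essentially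
4-edge-connected cubic near-bipartite brick. -/
theorem stmt15 (k : ℕ) (hk : 2 ≤ k) :
    Cubic (SimpleGraph.circulantGraph
        ({1, -1, ((2 * k : ℕ) : ZMod (4 * k))} : Set (ZMod (4 * k)))) ∧
    EssFourEdgeConnected (SimpleGraph.circulantGraph
        ({1, -1, ((2 * k : ℕ) : ZMod (4 * k))} : Set (ZMod (4 * k)))) ∧
    NearBipartite (SimpleGraph.circulantGraph
        ({1, -1, ((2 * k : ℕ) : ZMod (4 * k))} : Set (ZMod (4 * k)))) ∧
    IsBrick (SimpleGraph.circulantGraph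
        ({1, -1, ((2 * k : ℕ) : ZMod (4 * k))} : Set (ZMod (4 * k)))) := by
  have : NeZero k := ⟨by omega⟩
  exact ⟨mobiusLadder_cubic, mobiusLadder_essFourEdgeConnected, mobiusLadder_nearBipartite,
    mobiusLadder_isBrick⟩

end Paper
end

section
/- Every cubic brick on 4 vertices is isomorphic to K4, and every cubic brick on 6 vertices is isomorphic to the complement of the 6-cycle C6. -/
/-!
A cubic graph on four vertices is complete. On six vertices the complement `H` of a cubic graph
`G` is 2-regular, so every nonempty set of vertices closed under `H`-adjacency has at least three
elements, and a closed set of exactly three elements is an `H`-triangle. If `H` were disconnected,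
a component and its complement would thus be two triangles, making `G = K₃,₃` bipartite. So `H`
is connected, hence a single Hamiltonian cycle, and `G` is the complement of `C₆`.
-/

namespace Paper

open SimpleGraph

variable {V : Type*}

open Function

lemma eq_top_of_ncard_neighborSet [Finite V] {G : SimpleGraph V}
    (h : ∀ v, (G.neighborSet v).ncard = Nat.card V - 1) : G = ⊤ := by
  ext u w
  refine ⟨G.ne_of_adj, fun huw => ?_⟩
  have hsub : G.neighborSet u ⊆ {u}ᶜ := fun x hx => (G.ne_of_adj hx).symm
  have hcard : ({u}ᶜ : Set V).ncard ≤ (G.neighborSet u).ncard := by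
    rw [Set.ncard_compl, Set.ncard_singleton, h]
  rw [← mem_neighborSet, Set.eq_of_subset_of_ncard_le hsub hcard]
  exact Ne.symm huw

lemma ncard_neighborSet_compl [Finite V] (G : SimpleGraph V) (v : V) :
    (Gᶜ.neighborSet v).ncard = Nat.card V - 1 - (G.neighborSet v).ncard := by
  rw [neighborSet_compl, Set.ncard_sdiff_singleton_of_mem G.notMem_neighborSet_self,
    Set.ncard_compl]
  omega

def _root_.SimpleGraph.Iso.compl {W : Type*} {G : SimpleGraph V} {H : SimpleGraph W} (e : G ≃g H) :
    Gᶜ ≃g Hᶜ :=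
  ⟨e.toEquiv, by simp [e.map_adj_iff]⟩

lemma hom_adj_iff_of_ncard_neighborSet_le {W : Type*} [Finite V] {K : SimpleGraph W} {H : SimpleGraph V}
    (f : K →g H) (hf : Injective f)
    (hdeg : ∀ i, (H.neighborSet (f i)).ncard ≤ (K.neighborSet i).ncard) {i j : W} :
    H.Adj (f i) (f j) ↔ K.Adj i j := by
  refine ⟨fun h => ?_, f.map_adj⟩
  have hsub : f '' K.neighborSet i ⊆ H.neighborSet (f i) := by
    rintro _ ⟨k, hk, rfl⟩
    exact f.map_adj hk
  rw [← mem_neighborSet, ← Set.eq_of_subset_of_ncard_le hsub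
    (by rw [Set.ncard_image_of_injective _ hf]; exact hdeg i)] at h
  obtain ⟨k, hk, hkj⟩ := h
  exact hf hkj ▸ hk

lemma ncard_neighborSet_cycleGraph {n : ℕ} (i : Fin (n + 3)) :
    ((cycleGraph (n + 3)).neighborSet i).ncard = 2 := by
  rw [cycleGraph_neighborSet, Set.ncard_pair]
  simp only [ne_eq, sub_eq_iff_eq_add, add_assoc i, left_eq_add]
  exact ne_of_beq_false rfl

lemma Walk.adj_getVert_add_one {H : SimpleGraph V} {u : V} (p : H.Walk u u) {n : ℕ}
    (hn : p.length = n + 1) (i : Fin (n + 1)) : H.Adj (p.getVert i) (p.getVert ↑(i + 1)) := by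
  rw [Fin.val_add_one]
  split_ifs with h
  · have := p.adj_getVert_succ (i := n) (by omega)
    rw [h, Fin.val_last, Walk.getVert_zero]
    rwa [← hn, Walk.getVert_length] at this
  · exact p.adj_getVert_succ (by omega)

section TwoRegular

variable {H : SimpleGraph V}

def IsAdjClosed (H : SimpleGraph V) (S : Set V) : Prop := ∀ x ∈ S, ∀ y, H.Adj x y → y ∈ S

lemma IsAdjClosed.compl {S : Set V} (hS : IsAdjClosed H S) : IsAdjClosed H Sᶜ :=
  fun x hx y hxy hy => hx (hS y hy x hxy.symm)

lemma three_le_ncard_of_isAdjClosed [Finite V] (hreg : ∀ v, (H.neighborSet v).ncard = 2)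
    {S : Set V} (hS : IsAdjClosed H S) {x : V} (hx : x ∈ S) : 3 ≤ S.ncard :=
  calc 3 = (insert x (H.neighborSet x)).ncard := by
        rw [Set.ncard_insert_of_notMem H.notMem_neighborSet_self, hreg]
    _ ≤ S.ncard := Set.ncard_le_ncard (Set.insert_subset hx (hS x hx))

lemma isClique_of_isAdjClosed [Finite V] (hreg : ∀ v, (H.neighborSet v).ncard = 2)
    {S : Set V} (hS : IsAdjClosed H S) (h3 : S.ncard = 3) : H.IsClique S := by
  intro x hx y hy hxy
  have hsub : H.neighborSet x ⊆ S \ {x} := fun z hz => ⟨hS x hx z hz, (H.ne_of_adj hz).symm⟩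
  have hcard : (S \ {x}).ncard ≤ (H.neighborSet x).ncard := by
    rw [Set.ncard_sdiff_singleton_of_mem hx, h3, hreg]
  rw [← mem_neighborSet, Set.eq_of_subset_of_ncard_le hsub hcard]
  exact ⟨hy, Ne.symm hxy⟩

lemma colorable_two_compl_of_isClique {S : Set V} (hS : H.IsClique S) (hSc : H.IsClique Sᶜ) :
    Hᶜ.Colorable 2 := by
  classical
  refine ⟨Coloring.mk (fun v => if v ∈ S then 0 else 1) fun {u w} huw heq => ?_⟩
  rw [compl_adj] at huw
  by_cases hu : u ∈ S <;> by_cases hw : w ∈ S <;> simp only [hu, hw] at heq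
  · exact huw.2 (hS hu hw huw.1)
  · exact absurd heq (by decide)
  · exact absurd heq (by decide)
  · exact huw.2 (hSc hu hw huw.1)

lemma connected_of_not_colorable_compl [Finite V] (hV : Nat.card V ≤ 6)
    (hreg : ∀ v, (H.neighborSet v).ncard = 2) (hbip : ¬ Hᶜ.Colorable 2) : H.Connected := by
  have : Nonempty V := not_isEmpty_iff.mp fun _ => hbip (.of_isEmpty 2)
  refine ⟨fun v w => ?_⟩
  by_contra hvw
  let S := {x | H.Reachable v x}
  have hS : IsAdjClosed H S := fun x hx y hxy => hx.trans hxy.reachable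
  have hS3 := three_le_ncard_of_isAdjClosed hreg hS (Reachable.refl v)
  have hSc3 := three_le_ncard_of_isAdjClosed hreg hS.compl hvw
  have hsum := Set.ncard_add_ncard_compl S
  exact hbip (colorable_two_compl_of_isClique (isClique_of_isAdjClosed hreg hS (by omega))
    (isClique_of_isAdjClosed hreg hS.compl (by omega)))

theorem nonempty_iso_cycleGraph [Finite V] (hconn : H.Connected)
    (hreg : ∀ v, (H.neighborSet v).ncard = 2) : Nonempty (cycleGraph (Nat.card V) ≃g H) := by
  obtain ⟨v⟩ := hconn.nonempty
  have hcyc : H.IsCycles := fun w _ => hreg w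
  obtain ⟨p, hp, hverts⟩ := hcyc.exists_cycle_toSubgraph_verts_eq_connectedComponentSupp
    (c := H.connectedComponentMk v) rfl (Set.nonempty_of_ncard_ne_zero (by rw [hreg]; omega))
  obtain ⟨n, hn⟩ : ∃ n, p.length = n + 3 := ⟨p.length - 3, by have := hp.three_le_length; omega⟩
  let f : Fin (n + 3) → V := fun i => p.getVert i
  have hinj : Injective f := fun i j hij =>
    Fin.ext (hp.getVert_injOn' (by simp only [Set.mem_ofPred_eq]; omega)
      (by simp only [Set.mem_ofPred_eq]; omega) hij)
  have hsurj : Surjective f := by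
    intro w
    have hw : w ∈ p.support := by
      rw [← Walk.mem_verts_toSubgraph, hverts, ConnectedComponent.mem_supp_iff,
        ConnectedComponent.eq]
      exact hconn.preconnected w v
    obtain ⟨k, rfl, hk⟩ := Walk.mem_support_iff_exists_getVert.mp hw
    rcases hk.lt_or_eq with hk | rfl
    · exact ⟨⟨k, by omega⟩, rfl⟩
    · exact ⟨0, by simp [f, Walk.getVert_length]⟩
  let φ : cycleGraph (n + 3) →g H := ⟨f, fun {i j} hij => by
    rcases cycleGraph_adj.mp hij with h | h <;> obtain rfl := sub_eq_iff_eq_add'.mp h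
    · exact (Walk.adj_getVert_add_one p hn j).symm
    · exact Walk.adj_getVert_add_one p hn i⟩
  rw [← Nat.card_eq_of_bijective f ⟨hinj, hsurj⟩, Nat.card_eq_fintype_card, Fintype.card_fin]
  exact ⟨⟨Equiv.ofBijective f ⟨hinj, hsurj⟩, hom_adj_iff_of_ncard_neighborSet_le φ hinj
    fun i => by rw [hreg, ncard_neighborSet_cycleGraph]⟩⟩

end TwoRegular

theorem stmt16_general {V : Type*} (G : SimpleGraph V)
    (hG : IsBrick G) (hcubic : Cubic G) :
    (Nat.card V = 4 → Nonempty (G ≃g (⊤ : SimpleGraph (Fin 4)))) ∧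
    (Nat.card V = 6 → Nonempty (G ≃g (SimpleGraph.cycleGraph 6)ᶜ)) := by
  constructor
  · intro h4
    have : Finite V := Nat.finite_of_card_ne_zero (by omega)
    obtain rfl : G = ⊤ := eq_top_of_ncard_neighborSet fun v => by rw [hcubic v, h4]
    exact ⟨Iso.completeGraph ((Finite.equivFin V).trans (finCongr h4))⟩
  · intro h6
    have : Finite V := Nat.finite_of_card_ne_zero (by omega)
    have hreg : ∀ v, (Gᶜ.neighborSet v).ncard = 2 := fun v => by
      rw [ncard_neighborSet_compl, hcubic, h6]
    have hconn := connected_of_not_colorable_compl h6.le hreg (by rw [compl_compl]; exact hG.2.1)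
    obtain ⟨e⟩ := nonempty_iso_cycleGraph hconn hreg
    rw [h6] at e
    exact ⟨(compl_compl G ▸ e.compl).symm⟩

/-- Every cubic brick on 4 vertices is isomorphic to `K₄`, and every
cubic brick on 6 vertices is isomorphic to the complement of the 6-cycle. -/
theorem stmt16 {V : Type*} [Fintype V] (G : SimpleGraph V)
    (hG : IsBrick G) (hcubic : Cubic G) :
    (Nat.card V = 4 → Nonempty (G ≃g (⊤ : SimpleGraph (Fin 4)))) ∧
    (Nat.card V = 6 → Nonempty (G ≃g (SimpleGraph.cycleGraph 6)ᶜ)) :=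
  stmt16_general G hG hcubic

end Paper
end
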